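/- arXiv:1501.05226 — 8 statements merged into one kernel-verified Lean document; each statement's English description precedes it below -/
import Mathlib

section
/- The function f(x) = x² − x³ on the interval I = [0, 1/3] is convex on I, but there is no convex function F of class C³ on any open interval J containing I with F = f on I. -/
/-!
On the interior of `I` any extension `F` has `F'' = f'' = 2 - 6x` and `F''' = f''' = -6`, and
since `F''` and `F'''` are continuous on `J` these identities persist at the endpoint `1/3`,
where `F''(1/3) = 0`. Convexity of `F` makes `F'' ≥ 0` on `J`, so `1/3` is a local minimum of
`F''` and `F'''(1/3) = 0`, contradicting `F'''(1/3) = -6`.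
-/

open Set

section IterateDeriv

variable {E : Type*} [NormedAddCommGroup E] [NormedSpace ℝ E] {F G : ℝ → E} {s : Set ℝ}

theorem Set.EqOn.iterate_deriv (hs : IsOpen s) (h : EqOn F G s) (k : ℕ) :
    EqOn (_root_.deriv^[k] F) (_root_.deriv^[k] G) s := by
  induction k with
  | zero => exact h
  | succ k ih =>
    simp only [Function.iterate_succ_apply']
    exact ih.deriv hs

theorem ContDiffOn.continuousOn_iterate_deriv_of_isOpen {n k : ℕ} (hF : ContDiffOn ℝ n F s)
    (hs : IsOpen s) (hk : k ≤ n) : ContinuousOn (deriv^[k] F) s := by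
  rw [← iteratedDeriv_eq_iterate]
  exact (hF.continuousOn_iteratedDerivWithin (by exact_mod_cast hk) hs.uniqueDiffOn).congr
    (iteratedDerivWithin_of_isOpen hs).symm

theorem Set.EqOn.iterate_deriv_Icc {J : Set ℝ} {a b : ℝ} {n k : ℕ} (hab : a < b)
    (hJ : IsOpen J) (hIJ : Icc a b ⊆ J) (hF : ContDiffOn ℝ n F J) (hG : ContDiffOn ℝ n G J)
    (hk : k ≤ n) (h : EqOn F G (Icc a b)) :
    EqOn (_root_.deriv^[k] F) (_root_.deriv^[k] G) (Icc a b) :=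
  ((h.mono Ioo_subset_Icc_self).iterate_deriv isOpen_Ioo k).of_subset_closure
    ((hF.continuousOn_iterate_deriv_of_isOpen hJ hk).mono hIJ)
    ((hG.continuousOn_iterate_deriv_of_isOpen hJ hk).mono hIJ)
    Ioo_subset_Icc_self (closure_Ioo hab.ne).ge

end IterateDeriv

section Convex

variable {F : ℝ → ℝ} {s : Set ℝ} {x : ℝ}

theorem ConvexOn.iterate_deriv_two_nonneg (hs : IsOpen s) (hF : ConvexOn ℝ s F)
    (hdF : DifferentiableOn ℝ F s) (hx : x ∈ s) : 0 ≤ deriv^[2] F x := by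
  rw [Function.iterate_succ_apply', Function.iterate_one, ← derivWithin_of_isOpen hs hx]
  exact (hF.monotoneOn_deriv fun y hy ↦ hdF.differentiableAt (hs.mem_nhds hy)).derivWithin_nonneg

theorem ConvexOn.iterate_deriv_three_eq_zero (hs : IsOpen s) (hF : ConvexOn ℝ s F)
    (hdF : DifferentiableOn ℝ F s) (hx : x ∈ s) (h2 : deriv^[2] F x = 0) :
    deriv^[3] F x = 0 := by
  have hmin : IsLocalMin (deriv^[2] F) x :=
    Filter.mem_of_superset (hs.mem_nhds hx) fun y hy ↦
      h2 ▸ hF.iterate_deriv_two_nonneg hs hdF hy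
  rw [Function.iterate_succ_apply']
  exact hmin.deriv_eq_zero

end Convex

theorem deriv_sq_sub_cube :
    deriv (fun x : ℝ ↦ x ^ 2 - x ^ 3) = fun x ↦ 2 * x - 3 * x ^ 2 := by
  ext x
  simp

theorem iterate_deriv_two_sq_sub_cube :
    deriv^[2] (fun x : ℝ ↦ x ^ 2 - x ^ 3) = fun x ↦ 2 - 6 * x := by
  ext x
  change deriv (deriv _) x = _
  rw [deriv_sq_sub_cube, deriv_fun_sub (by fun_prop) (by fun_prop), deriv_const_mul_field',
    deriv_const_mul_field']
  simp only [deriv_id'', deriv_pow_field]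
  ring

theorem iterate_deriv_three_sq_sub_cube :
    deriv^[3] (fun x : ℝ ↦ x ^ 2 - x ^ 3) = fun _ ↦ -6 := by
  ext x
  rw [Function.iterate_succ_apply', iterate_deriv_two_sq_sub_cube]
  simp

theorem convexOn_sq_sub_cube :
    ConvexOn ℝ (Icc (0 : ℝ) (1 / 3)) (fun x ↦ x ^ 2 - x ^ 3) := by
  refine convexOn_of_deriv2_nonneg (convex_Icc _ _) (by fun_prop) (by fun_prop) ?_ ?_
  · rw [deriv_sq_sub_cube]
    fun_prop
  · rw [interior_Icc, iterate_deriv_two_sq_sub_cube]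
    intro x hx
    linarith [hx.2]

/-- The function `f(x) = x² - x³` is convex on `I = [0, 1/3]`, but there is no convex function
`F` of class `C³` on any open interval `J ⊇ I` with `F = f` on `I`. -/
theorem stmt_1 :
    ConvexOn ℝ (Set.Icc (0:ℝ) (1/3)) (fun x => x^2 - x^3) ∧
    ∀ a b : ℝ, Set.Icc (0:ℝ) (1/3) ⊆ Set.Ioo a b →
      ¬ ∃ F : ℝ → ℝ, ContDiffOn ℝ 3 F (Set.Ioo a b) ∧ ConvexOn ℝ (Set.Ioo a b) F ∧
        Set.EqOn F (fun x => x^2 - x^3) (Set.Icc (0:ℝ) (1/3)) := by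
  refine ⟨convexOn_sq_sub_cube, ?_⟩
  rintro a b hIJ ⟨F, hF, hconv, hEq⟩
  have hderiv {k : ℕ} (hk : k ≤ 3) :
      EqOn (deriv^[k] F) (deriv^[k] fun x : ℝ ↦ x ^ 2 - x ^ 3) (Icc 0 (1 / 3)) :=
    hEq.iterate_deriv_Icc (by norm_num) isOpen_Ioo hIJ hF (by fun_prop) hk
  have h13 : (1 / 3 : ℝ) ∈ Icc 0 (1 / 3) := by norm_num
  have h2 : deriv^[2] F (1 / 3) = 0 := by
    rw [hderiv (by norm_num) h13, iterate_deriv_two_sq_sub_cube]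
    norm_num
  have h3 : deriv^[3] F (1 / 3) = -6 := by
    rw [hderiv le_rfl h13, iterate_deriv_three_sq_sub_cube]
  have h3' : deriv^[3] F (1 / 3) = 0 :=
    hconv.iterate_deriv_three_eq_zero isOpen_Ioo (hF.differentiableOn (by norm_num)) (hIJ h13) h2
  linarith
end

section
/- Let C ⊆ ℝⁿ be compact and convex, m ≥ 2, f ∈ C^m(ℝⁿ) satisfying condition (CW^m) on C. Then there exists r > 0 such that for every x with 0 < d(x,C) ≤ r and every unit vector v, D²f(x)(v,v) ≥ −d(x,C)^{m−2}. -/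
/-!
Let `y` be a point of `C` nearest to `x`, `d = d(x,C) = |x - y|` and `w = (x - y)/d`, and
Taylor-expand `g(s) = D²f(y + s w)(v,v)` at `s = 0` to order `m - 2`. The Taylor polynomial of
`g` at `s = d` is exactly the `(CWᵐ)` sum at `y` with `t = d`, hence `≥ -d^{m-2}/2` once
`d ≤ t_{1/2}`. The Lagrange remainder replaces `Dᵐf(y)` by `Dᵐf(y + ξ w)` with `ξ ∈ [0, d]` in the
last term, which changes it by at most `d^{m-2}/2` once `d` is below the modulus of uniform
continuity of `Dᵐf` for `(m-2)!/2`.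
-/

/-- The sum `∑_{k=2}^m (t^{k-2}/(k-2)!) Dᵏf(y)(w^{k-2}, v²)` appearing in condition `(CWᵐ)`. -/
noncomputable def cwSum {n : ℕ} (m : ℕ) (f : EuclideanSpace ℝ (Fin n) → ℝ)
    (y v w : EuclideanSpace ℝ (Fin n)) (t : ℝ) : ℝ :=
  ∑ k ∈ Finset.Icc 2 m,
    (t ^ (k - 2) / (Nat.factorial (k - 2))) *
      iteratedFDeriv ℝ k f y (fun i => if (i : ℕ) < k - 2 then w else v)

/-- Condition `(CWᵐ)` of Azagra-Mudarra on a set `C`. -/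
def CW {n : ℕ} (m : ℕ) (f : EuclideanSpace ℝ (Fin n) → ℝ)
    (C : Set (EuclideanSpace ℝ (Fin n))) : Prop :=
  ∀ ε > (0:ℝ), ∃ tε > (0:ℝ), ∀ y ∈ C, ∀ v w : EuclideanSpace ℝ (Fin n),
    ‖v‖ = 1 → ‖w‖ = 1 → ∀ t : ℝ, 0 < t → t ≤ tε →
      -ε * t ^ (m - 2) ≤ cwSum m f y v w t

open Finset Set

lemma cwSum_add_two {n : ℕ} (p : ℕ) (f : EuclideanSpace ℝ (Fin n) → ℝ)
    (y v w : EuclideanSpace ℝ (Fin n)) (t : ℝ) :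
    cwSum (p + 2) f y v w t =
      ∑ j ∈ range (p + 1), t ^ j / j.factorial *
        iteratedFDeriv ℝ (j + 2) f y (fun i : Fin (j + 2) => if (i : ℕ) < j then w else v) := by
  rw [cwSum, ← Finset.Ico_add_one_right_eq_Icc, sum_Ico_eq_sum_range,
    show p + 2 + 1 - 2 = p + 1 by omega]
  refine sum_congr rfl fun j _ => ?_
  rw [show 2 + j = j + 2 by omega, Nat.add_sub_cancel]

lemma exists_eq_add_dist_smul_of_ne {E : Type*} [NormedAddCommGroup E] [NormedSpace ℝ E]
    {x y : E} (hxy : x ≠ y) : ∃ w : E, ‖w‖ = 1 ∧ x = y + dist x y • w := by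
  have hd : ‖x - y‖ ≠ 0 := norm_ne_zero_iff.mpr (sub_ne_zero.mpr hxy)
  refine ⟨‖x - y‖⁻¹ • (x - y), ?_, ?_⟩
  · rw [norm_smul, norm_inv, norm_norm, inv_mul_cancel₀ hd]
  · rw [dist_eq_norm, smul_smul, mul_inv_cancel₀ hd, one_smul, add_sub_cancel]

lemma exists_taylor_lagrange_iteratedDeriv {g : ℝ → ℝ} {p : ℕ} (hg : ContDiff ℝ p g) {t : ℝ}
    (ht : 0 < t) :
    ∃ ξ ∈ Icc 0 t, g t = ∑ j ∈ range p, t ^ j / j.factorial * iteratedDeriv j g 0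
      + t ^ p / p.factorial * iteratedDeriv p g ξ := by
  cases p with
  | zero => exact ⟨t, right_mem_Icc.mpr ht.le, by simp⟩
  | succ q =>
    obtain ⟨ξ, hξ, h⟩ := taylor_mean_remainder_lagrange_iteratedDeriv ht.ne hg.contDiffOn
    rw [uIoo_of_le ht.le] at hξ
    refine ⟨ξ, Ioo_subset_Icc_self hξ, ?_⟩
    rw [taylor_within_apply, uIcc_of_le ht.le] at h
    have hsum : ∑ k ∈ range (q + 1),
        ((k.factorial : ℝ)⁻¹ * (t - 0) ^ k) • iteratedDerivWithin k g (Icc 0 t) 0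
        = ∑ k ∈ range (q + 1), t ^ k / k.factorial * iteratedDeriv k g 0 := by
      refine sum_congr rfl fun k hk => ?_
      rw [iteratedDerivWithin_eq_iteratedDeriv (uniqueDiffOn_Icc ht) (hg.contDiffAt.of_le ?_)
        (left_mem_Icc.mpr ht.le), smul_eq_mul, sub_zero, div_eq_inv_mul, mul_comm _ (t ^ k)]
      exact_mod_cast (mem_range.mp hk).le
    rw [hsum, sub_zero] at h
    linear_combination h

lemma neg_mul_pow_le_of_taylor_sum_ge {g : ℝ → ℝ} {p : ℕ} (hg : ContDiff ℝ p g) {d a b : ℝ}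
    (hd : 0 < d)
    (hsum : -a * d ^ p ≤ ∑ j ∈ range (p + 1), d ^ j / j.factorial * iteratedDeriv j g 0)
    (hosc : ∀ s ∈ Icc 0 d, |iteratedDeriv p g s - iteratedDeriv p g 0| ≤ b * p.factorial) :
    -(a + b) * d ^ p ≤ g d := by
  obtain ⟨ξ, hξ, htaylor⟩ := exists_taylor_lagrange_iteratedDeriv hg hd
  have hrem :
      -(b * d ^ p) ≤ d ^ p / p.factorial * (iteratedDeriv p g ξ - iteratedDeriv p g 0) := by
    have hfac : (0 : ℝ) < p.factorial := by positivity
    calc -(b * d ^ p) = d ^ p / p.factorial * -(b * p.factorial) := by field_simp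
      _ ≤ _ := by gcongr; exact neg_le_of_abs_le (hosc ξ hξ)
  rw [sum_range_succ] at hsum
  rw [htaylor]
  linarith

section Line

variable {E : Type*} [NormedAddCommGroup E] [NormedSpace ℝ E] {f : E → ℝ} {m : ℕ}

lemma hasDerivAt_iteratedFDeriv_comp_line (hf : ContDiff ℝ m f) {k : ℕ} (hk : k + 1 ≤ m)
    (y w : E) (M : Fin k → E) (s : ℝ) :
    HasDerivAt (fun s : ℝ => iteratedFDeriv ℝ k f (y + s • w) M)
      (iteratedFDeriv ℝ (k + 1) f (y + s • w) (Fin.cons w M)) s := by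
  have hline : HasDerivAt (fun s : ℝ => y + s • w) w s := by
    simpa using ((hasDerivAt_id s).smul_const w).const_add y
  have hdiff : Differentiable ℝ (iteratedFDeriv ℝ k f) :=
    hf.differentiable_iteratedFDeriv (by exact_mod_cast hk)
  have hcomp := (hdiff _).hasFDerivAt.comp_hasDerivAt s hline
  refine ((ContinuousMultilinearMap.apply ℝ (fun _ : Fin k => E) ℝ M).hasFDerivAt
    |>.comp_hasDerivAt s hcomp).congr_deriv ?_
  rw [iteratedFDeriv_succ_apply_left, Fin.cons_zero, Fin.tail_cons]
  rfl

lemma iteratedDeriv_iteratedFDeriv_two_comp_line (hf : ContDiff ℝ m f) (y w v : E) {j : ℕ}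
    (hj : j + 2 ≤ m) (s : ℝ) :
    iteratedDeriv j (fun s : ℝ => iteratedFDeriv ℝ 2 f (y + s • w) (fun _ => v)) s
      = iteratedFDeriv ℝ (j + 2) f (y + s • w)
          (fun i : Fin (j + 2) => if (i : ℕ) < j then w else v) := by
  induction j generalizing s with
  | zero => rfl
  | succ j ih =>
    rw [iteratedDeriv_succ, funext (ih (by omega)),
      (hasDerivAt_iteratedFDeriv_comp_line hf (by omega) y w _ s).deriv]
    congr 1
    ext i
    refine Fin.cases ?_ (fun i => ?_) i <;> simp [Fin.cons_succ]

lemma contDiff_iteratedFDeriv_two_comp_line (hf : ContDiff ℝ m f) (hm : 2 ≤ m) (y w v : E) :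
    ContDiff ℝ (m - 2 : ℕ)
      (fun s : ℝ => iteratedFDeriv ℝ 2 f (y + s • w) (fun _ => v)) := by
  have hD2 : ContDiff ℝ (m - 2 : ℕ) (iteratedFDeriv ℝ 2 f) :=
    hf.iteratedFDeriv_right (by norm_cast; omega)
  exact (ContinuousMultilinearMap.apply ℝ (fun _ : Fin 2 => E) ℝ (fun _ => v)).contDiff.comp
    (hD2.comp (contDiff_const.add (contDiff_id.smul contDiff_const)))

end Line

lemma abs_iteratedFDeriv_apply_sub_le_dist {E : Type*} [NormedAddCommGroup E] [NormedSpace ℝ E]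
    (f : E → ℝ) {k : ℕ} (a b : E) {M : Fin k → E} (hM : ∀ i, ‖M i‖ ≤ 1) :
    |iteratedFDeriv ℝ k f a M - iteratedFDeriv ℝ k f b M|
      ≤ dist (iteratedFDeriv ℝ k f a) (iteratedFDeriv ℝ k f b) := by
  rw [← sub_apply, ← Real.norm_eq_abs, dist_eq_norm]
  simpa using (iteratedFDeriv ℝ k f a - iteratedFDeriv ℝ k f b).le_opNorm_mul_pow_of_le
    (pi_norm_le_iff_of_nonneg zero_le_one |>.mpr hM)

lemma neg_mul_pow_le_iteratedFDeriv_two_of_cwSum {n p : ℕ} {f : EuclideanSpace ℝ (Fin n) → ℝ}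
    (hf : ContDiff ℝ (p + 2 : ℕ) f) {y v w : EuclideanSpace ℝ (Fin n)} (hv : ‖v‖ = 1)
    (hw : ‖w‖ = 1) {d a b : ℝ} (hd : 0 < d) (hcw : -a * d ^ p ≤ cwSum (p + 2) f y v w d)
    (hosc : ∀ s ∈ Icc 0 d,
      dist (iteratedFDeriv ℝ (p + 2) f (y + s • w)) (iteratedFDeriv ℝ (p + 2) f y)
        ≤ b * p.factorial) :
    -(a + b) * d ^ p ≤ iteratedFDeriv ℝ 2 f (y + d • w) (fun _ => v) := by
  set g : ℝ → ℝ := fun s => iteratedFDeriv ℝ 2 f (y + s • w) (fun _ => v)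
  have hD : ∀ j ≤ p, ∀ s, iteratedDeriv j g s = iteratedFDeriv ℝ (j + 2) f (y + s • w)
      (fun i : Fin (j + 2) => if (i : ℕ) < j then w else v) :=
    fun j hj => iteratedDeriv_iteratedFDeriv_two_comp_line hf y w v (by omega)
  refine neg_mul_pow_le_of_taylor_sum_ge
    (by simpa using contDiff_iteratedFDeriv_two_comp_line hf (by omega) y w v) hd ?_ ?_
  · rw [cwSum_add_two] at hcw
    refine hcw.trans_eq (sum_congr rfl fun j hj => ?_)
    rw [hD j (Nat.lt_succ_iff.mp (mem_range.mp hj)), zero_smul, add_zero]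
  · intro s hs
    rw [hD p le_rfl, hD p le_rfl, zero_smul, add_zero]
    refine (abs_iteratedFDeriv_apply_sub_le_dist f _ _ fun i => ?_).trans (hosc s hs)
    split_ifs <;> simp [hw, hv]

theorem stmt_3_general {n : ℕ} (C : Set (EuclideanSpace ℝ (Fin n))) (hCc : IsCompact C)
    (hCne : C.Nonempty) (m : ℕ) (hm : 2 ≤ m)
    (f : EuclideanSpace ℝ (Fin n) → ℝ) (hf : ContDiff ℝ (m : ℕ∞) f)
    (hucont : UniformContinuous (iteratedFDeriv ℝ m f))
    (hcw : CW m f C) :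
    ∃ r > (0:ℝ), ∀ x : EuclideanSpace ℝ (Fin n),
      0 < Metric.infDist x C → Metric.infDist x C ≤ r →
      ∀ v : EuclideanSpace ℝ (Fin n), ‖v‖ = 1 →
      -(Metric.infDist x C) ^ (m - 2) ≤ iteratedFDeriv ℝ 2 f x (fun _ => v) := by
  obtain ⟨p, rfl⟩ : ∃ p, m = p + 2 := ⟨m - 2, by omega⟩
  obtain ⟨tε, htε, hcw⟩ := hcw (1 / 2) one_half_pos
  obtain ⟨δ, hδ, hDm⟩ :=
    Metric.uniformContinuous_iff.mp hucont (1 / 2 * p.factorial) (by positivity)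
  refine ⟨min tε (δ / 2), by positivity, fun x hd hdr v hv => ?_⟩
  obtain ⟨y, hyC, hxy⟩ := hCc.exists_infDist_eq_dist hCne x
  rw [hxy] at hd hdr ⊢
  obtain ⟨w, hw, hx⟩ := exists_eq_add_dist_smul_of_ne (dist_pos.mp hd)
  generalize dist x y = d at hd hdr hx ⊢
  subst hx
  have hgd := neg_mul_pow_le_iteratedFDeriv_two_of_cwSum hf hv hw hd
    (hcw y hyC v w hv hw d hd (hdr.trans (min_le_left _ _))) fun s hs => (hDm ?_).le
  · rwa [add_halves, neg_one_mul] at hgd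
  · rw [dist_self_add_left, norm_smul, hw, mul_one, Real.norm_of_nonneg hs.1]
    linarith [hs.2, min_le_right tε (δ / 2)]

/-- If `C` is compact convex, `m ≥ 2`, `f ∈ Cᵐ(ℝⁿ)` satisfies `(CWᵐ)` on `C` (and `Dᵐf` is
uniformly continuous), then there is `r > 0` such that `D²f(x)(v,v) ≥ -d(x,C)^{m-2}` whenever
`0 < d(x,C) ≤ r` and `v` is a unit vector. -/
theorem stmt_3 {n : ℕ} (C : Set (EuclideanSpace ℝ (Fin n))) (hCc : IsCompact C)
    (hCconv : Convex ℝ C) (hCne : C.Nonempty) (m : ℕ) (hm : 2 ≤ m)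
    (f : EuclideanSpace ℝ (Fin n) → ℝ) (hf : ContDiff ℝ (m : ℕ∞) f)
    (hucont : UniformContinuous (iteratedFDeriv ℝ m f))
    (hcw : CW m f C) :
    ∃ r > (0:ℝ), ∀ x : EuclideanSpace ℝ (Fin n),
      0 < Metric.infDist x C → Metric.infDist x C ≤ r →
      ∀ v : EuclideanSpace ℝ (Fin n), ‖v‖ = 1 →
      -(Metric.infDist x C) ^ (m - 2) ≤ iteratedFDeriv ℝ 2 f x (fun _ => v) :=
  stmt_3_general C hCc hCne m hm f hf hucont hcw
end

section
/- Let C ⊂ ℝⁿ be compact convex, x ∉ C, x_C the metric projection of x onto C, u_x = (x − x_C)/|x − x_C|, and h(w) = max_{z∈C}⟨z,w⟩. Set α_x = d(x,C)/(d(x,C) + diam(C)). Then ⟨x, u_x⟩ − h(u_x) = d(x,C), and for every unit vector w whose angle with u_x lies in [α_x/3, α_x/2] one has (1/2) d(x,C) ≤ ⟨x,w⟩ − h(w) ≤ d(x,C). -/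
open scoped RealInnerProductSpace

/-!
Write `d = d(x,C) = ‖x - x_C‖` and `gap w = ⟨x,w⟩ - h(w)`, which equals `⟨x - z, w⟩` for a
maximiser `z ∈ C` of `⟨·,w⟩` and is at most `⟨x - z, w⟩` for every `z ∈ C`. The variational
inequality of the projection, `⟨x - x_C, z - x_C⟩ ≤ 0` on `C`, gives `d ≤ ⟨x - z, u⟩` for all
`z ∈ C`, whence `gap u = d`. For a unit vector `w` at angle `θ` from `u`,
`⟨x - z, w⟩ ≥ ⟨x - z, u⟩ - ‖x - z‖ ‖w - u‖ ≥ d - (d + diam C) θ`, since chord length is at most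
arc length; `θ ≤ α/2` makes the error at most `d/2`. The upper bound `gap w ≤ ⟨x - x_C, w⟩ ≤ d`
holds for every unit vector `w`.
-/

open InnerProductGeometry Metric

section InnerProductSpace

variable {E : Type*} [NormedAddCommGroup E] [InnerProductSpace ℝ E]

theorem InnerProductGeometry.norm_sub_le_angle {w u : E} (hw : ‖w‖ = 1) (hu : ‖u‖ = 1) :
    ‖w - u‖ ≤ angle w u := by
  have hsq : ‖w - u‖ * ‖w - u‖ ≤ angle w u * angle w u := by
    rw [norm_sub_sq_eq_norm_sq_add_norm_sq_sub_two_mul_norm_mul_norm_mul_cos_angle, hw, hu]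
    nlinarith [Real.one_sub_sq_div_two_le_cos (x := angle w u)]
  exact (mul_self_le_mul_self_iff (norm_nonneg _) (angle_nonneg w u)).2 hsq

theorem InnerProductGeometry.angle_eq_arccos_inner_of_norm_eq_one {w u : E} (hw : ‖w‖ = 1) (hu : ‖u‖ = 1) :
    angle w u = Real.arccos ⟪w, u⟫ := by
  rw [angle, hw, hu, mul_one, div_one]

theorem inner_sub_norm_mul_norm_sub_le_inner (v w u : E) :
    ⟪v, u⟫ - ‖v‖ * ‖w - u‖ ≤ ⟪v, w⟫ := by
  have h := neg_le_of_abs_le (abs_real_inner_le_norm v (w - u))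
  rw [inner_sub_right] at h
  linarith

theorem real_inner_inv_norm_smul_self (v : E) : ⟪v, ‖v‖⁻¹ • v⟫ = ‖v‖ := by
  rw [real_inner_smul_right, real_inner_self_eq_norm_mul_norm, ← mul_assoc, inv_mul_mul_self]

section Support

variable {C : Set E} {w : E} {s : ℝ}

theorem IsGreatest.sub_le_inner_sub (hs : IsGreatest ((fun z => ⟪z, w⟫) '' C) s) (x : E)
    {z : E} (hz : z ∈ C) : ⟪x, w⟫ - s ≤ ⟪x - z, w⟫ := by
  rw [inner_sub_left]
  linarith [hs.2 ⟨z, hz, rfl⟩]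

theorem IsGreatest.exists_sub_eq_inner_sub (hs : IsGreatest ((fun z => ⟪z, w⟫) '' C) s)
    (x : E) : ∃ z ∈ C, ⟪x, w⟫ - s = ⟪x - z, w⟫ := by
  obtain ⟨z, hz, rfl⟩ := hs.1
  exact ⟨z, hz, (inner_sub_left x z w).symm⟩

end Support

section Projection

variable {C : Set E} {x xC : E}

theorem inner_sub_nonpos_of_dist_eq_infDist (hC : Convex ℝ C) (hxC : xC ∈ C)
    (hproj : dist x xC = infDist x C) {z : E} (hz : z ∈ C) : ⟪x - xC, z - xC⟫ ≤ 0 := by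
  have : Nonempty C := ⟨⟨xC, hxC⟩⟩
  refine (norm_eq_iInf_iff_real_inner_le_zero hC hxC).1 ?_ z hz
  simp only [← dist_eq_norm, hproj, infDist_eq_iInf]

theorem norm_sub_le_inner_sub_of_dist_eq_infDist (hC : Convex ℝ C) (hxC : xC ∈ C)
    (hproj : dist x xC = infDist x C) {z : E} (hz : z ∈ C) :
    ‖x - xC‖ ≤ ⟪x - z, ‖x - xC‖⁻¹ • (x - xC)⟫ := by
  have hnormal := inner_sub_nonpos_of_dist_eq_infDist hC hxC hproj hz
  have hsplit : x - z = (x - xC) - (z - xC) := by abel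
  rw [hsplit, inner_sub_left, real_inner_inv_norm_smul_self, real_inner_smul_right,
    real_inner_comm]
  linarith [mul_nonpos_of_nonneg_of_nonpos (inv_nonneg.2 (norm_nonneg (x - xC))) hnormal]

end Projection

end InnerProductSpace

theorem stmt_9_general {n : ℕ} (C : Set (EuclideanSpace ℝ (Fin n))) (hCc : IsCompact C)
    (hCconv : Convex ℝ C)
    (x xC : EuclideanSpace ℝ (Fin n)) (hx : x ∉ C) (hxC : xC ∈ C)
    (hproj : dist x xC = Metric.infDist x C)
    (h : EuclideanSpace ℝ (Fin n) → ℝ)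
    (hh : ∀ w, IsGreatest ((fun z => ⟪z, w⟫) '' C) (h w))
    (u : EuclideanSpace ℝ (Fin n)) (hu : u = ‖x - xC‖⁻¹ • (x - xC))
    (α : ℝ) (hα : α = Metric.infDist x C / (Metric.infDist x C + Metric.diam C)) :
    (⟪x, u⟫ - h u = Metric.infDist x C) ∧
    ∀ w : EuclideanSpace ℝ (Fin n), ‖w‖ = 1 →
      Real.arccos ⟪w, u⟫ ∈ Set.Icc (α / 3) (α / 2) →
      Metric.infDist x C / 2 ≤ ⟪x, w⟫ - h w ∧ ⟪x, w⟫ - h w ≤ Metric.infDist x C := by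
  have hd : infDist x C = ‖x - xC‖ := by rw [← hproj, dist_eq_norm]
  have hdpos : 0 < infDist x C := hd ▸ norm_pos_iff.2 (sub_ne_zero.2 fun hx' => hx (hx' ▸ hxC))
  have hu1 : ‖u‖ = 1 := by rw [hu, norm_smul, norm_inv, norm_norm, ← hd, inv_mul_cancel₀ hdpos.ne']
  have hnormal : ∀ z ∈ C, infDist x C ≤ ⟪x - z, u⟫ := fun z hz =>
    hd ▸ hu ▸ norm_sub_le_inner_sub_of_dist_eq_infDist hCconv hxC hproj hz
  have hupper : ∀ w, ‖w‖ = 1 → ⟪x, w⟫ - h w ≤ infDist x C := fun w hw =>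
    ((hh w).sub_le_inner_sub x hxC).trans (by simpa [hw, hd] using real_inner_le_norm (x - xC) w)
  refine ⟨(hupper u hu1).antisymm ?_, fun w hw hθ => ⟨?_, hupper w hw⟩⟩
  · obtain ⟨z, hz, hgap⟩ := (hh u).exists_sub_eq_inner_sub x
    exact hgap ▸ hnormal z hz
  obtain ⟨z, hz, hgap⟩ := (hh w).exists_sub_eq_inner_sub x
  have hchord : ‖w - u‖ ≤ α / 2 :=
    (norm_sub_le_angle hw hu1).trans (angle_eq_arccos_inner_of_norm_eq_one hw hu1 ▸ hθ.2)
  have hfar : ‖x - z‖ ≤ infDist x C + diam C := by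
    rw [← dist_eq_norm, ← hproj]
    exact (dist_triangle x xC z).trans (by gcongr; exact dist_le_diam_of_mem hCc.isBounded hxC hz)
  calc infDist x C / 2 = infDist x C - (infDist x C + diam C) * (α / 2) := by
        rw [hα]; field_simp; ring
    _ ≤ ⟪x - z, u⟫ - ‖x - z‖ * ‖w - u‖ := by
        gcongr
        exact hnormal z hz
    _ ≤ ⟪x, w⟫ - h w := hgap ▸ inner_sub_norm_mul_norm_sub_le_inner _ _ _

/-- Let `C ⊆ ℝⁿ` be compact convex, `x ∉ C`, `x_C` the metric projection of `x` onto `C`,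
`u = (x - x_C)/‖x - x_C‖`, `h` the support function of `C`, and
`α = d(x,C)/(d(x,C) + diam C)`. Then `⟨x,u⟩ - h(u) = d(x,C)`, and for every unit vector `w`
whose angle with `u` lies in `[α/3, α/2]` one has `d(x,C)/2 ≤ ⟨x,w⟩ - h(w) ≤ d(x,C)`. -/
theorem stmt_9 {n : ℕ} (C : Set (EuclideanSpace ℝ (Fin n))) (hCc : IsCompact C)
    (hCconv : Convex ℝ C) (hCne : C.Nonempty)
    (x xC : EuclideanSpace ℝ (Fin n)) (hx : x ∉ C) (hxC : xC ∈ C)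
    (hproj : dist x xC = Metric.infDist x C)
    (h : EuclideanSpace ℝ (Fin n) → ℝ)
    (hh : ∀ w, IsGreatest ((fun z => ⟪z, w⟫) '' C) (h w))
    (u : EuclideanSpace ℝ (Fin n)) (hu : u = ‖x - xC‖⁻¹ • (x - xC))
    (α : ℝ) (hα : α = Metric.infDist x C / (Metric.infDist x C + Metric.diam C)) :
    (⟪x, u⟫ - h u = Metric.infDist x C) ∧
    ∀ w : EuclideanSpace ℝ (Fin n), ‖w‖ = 1 →
      Real.arccos ⟪w, u⟫ ∈ Set.Icc (α / 3) (α / 2) →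
      Metric.infDist x C / 2 ≤ ⟪x, w⟫ - h w ∧ ⟪x, w⟫ - h w ≤ Metric.infDist x C :=
  stmt_9_general C hCc hCconv x xC hx hxC hproj h hh u hu α hα
end

section
/- Let u, v be unit vectors in ℝⁿ with ⟨u,v⟩ ≥ 0 and 0 < α ≤ 1. Then there exists a unit vector w₀ such that every unit vector w with angle(w, w₀) ≤ α/12 satisfies: (a) angle(u, w) ∈ [α/3, α/2], and (b) ⟨w, v⟩ ≥ sin(α/3). -/
/-!
Put `w₀` on the great circle from `u` towards `v`, at angle `5α/12` from `u`. The triangle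
inequality for angles then keeps `angle u w` within `α/12` of `5α/12`, and bounds `angle w v` by
`α/12 + |angle u v - 5α/12|`, which is at most `π/2 - α/3` because `angle u v ≤ π/2`; hence
`⟪w, v⟫ = cos (angle w v) ≥ cos (π/2 - α/3) = sin (α/3)`.
-/

open scoped RealInnerProductSpace
open InnerProductGeometry Real Module

variable {V : Type*} [NormedAddCommGroup V] [InnerProductSpace ℝ V]

lemma arccos_inner_eq_angle {x y : V} (hx : ‖x‖ = 1) (hy : ‖y‖ = 1) :
    arccos ⟪x, y⟫ = angle x y := by
  simp [angle, hx, hy]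

lemma exists_norm_eq_one_inner_eq_zero (hV : 2 ≤ finrank ℝ V) (u : V) :
    ∃ e : V, ‖e‖ = 1 ∧ ⟪u, e⟫ = 0 := by
  have : FiniteDimensional ℝ V := finite_of_finrank_pos (by omega)
  have hspan : finrank ℝ (ℝ ∙ u) ≤ 1 := by
    simpa using finrank_span_le_card ({u} : Set V)
  have hperp : (ℝ ∙ u)ᗮ ≠ ⊥ := by
    intro h
    have := (ℝ ∙ u).finrank_add_finrank_orthogonal
    rw [h, finrank_bot] at this
    omega
  obtain ⟨x, hx, hx0⟩ := Submodule.exists_mem_ne_zero_of_ne_bot hperp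
  refine ⟨NormedSpace.normalize x, NormedSpace.norm_normalize_eq_one_iff.mpr hx0, ?_⟩
  rw [NormedSpace.normalize, real_inner_smul_right,
    Submodule.inner_right_of_mem_orthogonal (Submodule.mem_span_singleton_self u) hx, mul_zero]

noncomputable def greatCircle (u e : V) (t : ℝ) : V := cos t • u + sin t • e

section greatCircle

variable {u e : V} (hu : ‖u‖ = 1) (he : ‖e‖ = 1) (hue : ⟪u, e⟫ = 0)
include hu he hue

lemma inner_greatCircle (s t : ℝ) :
    ⟪greatCircle u e s, greatCircle u e t⟫ = cos (s - t) := by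
  have heu : ⟪e, u⟫ = 0 := by rw [real_inner_comm, hue]
  simp only [greatCircle, inner_add_left, inner_add_right, real_inner_smul_left,
    real_inner_smul_right, real_inner_self_eq_norm_sq, hu, he, hue, heu, cos_sub]
  ring

lemma norm_greatCircle (t : ℝ) : ‖greatCircle u e t‖ = 1 := by
  have := inner_greatCircle hu he hue t t
  rw [sub_self, cos_zero, real_inner_self_eq_norm_sq] at this
  exact (pow_eq_one_iff_of_nonneg (norm_nonneg _) two_ne_zero).mp this

lemma angle_greatCircle {s t : ℝ} (hst : |s - t| ≤ π) :
    angle (greatCircle u e s) (greatCircle u e t) = |s - t| := by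
  rw [← arccos_inner_eq_angle (norm_greatCircle hu he hue s) (norm_greatCircle hu he hue t),
    inner_greatCircle hu he hue, ← cos_abs, arccos_cos (abs_nonneg _) hst]

end greatCircle

lemma norm_sub_inner_smul_eq_sin_angle {u v : V} (hu : ‖u‖ = 1) (hv : ‖v‖ = 1) :
    ‖v - ⟪u, v⟫ • u‖ = sin (angle u v) := by
  have hsq : ‖v - ⟪u, v⟫ • u‖ ^ 2 = sin (angle u v) ^ 2 := by
    rw [sin_sq, ← inner_eq_cos_angle_of_norm_eq_one hu hv, norm_sub_sq_real, norm_smul,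
      Real.norm_eq_abs, mul_pow, sq_abs, real_inner_smul_right, real_inner_comm, hu, hv]
    ring
  exact (sq_eq_sq₀ (norm_nonneg _) (sin_angle_nonneg u v)).mp hsq

lemma exists_eq_greatCircle_angle {u v e₀ : V} (hu : ‖u‖ = 1) (hv : ‖v‖ = 1)
    (he₀ : ‖e₀‖ = 1) (hue₀ : ⟪u, e₀⟫ = 0) :
    ∃ e : V, ‖e‖ = 1 ∧ ⟪u, e⟫ = 0 ∧ v = greatCircle u e (angle u v) := by
  set d := v - ⟪u, v⟫ • u with hd
  have hud : ⟪u, d⟫ = 0 := by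
    rw [hd, inner_sub_right, real_inner_smul_right, real_inner_self_eq_norm_sq, hu]; ring
  have hsin : ‖d‖ = sin (angle u v) := norm_sub_inner_smul_eq_sin_angle hu hv
  have hv_eq : v = cos (angle u v) • u + d := by
    rw [← inner_eq_cos_angle_of_norm_eq_one hu hv, hd, add_sub_cancel]
  by_cases h : d = 0
  -- then `v = ± u`, so `sin (angle u v) = 0` and any unit `e₀ ⟂ u` will do
  · refine ⟨e₀, he₀, hue₀, ?_⟩
    rw [greatCircle, ← hsin, h, norm_zero, zero_smul, ← h]
    exact hv_eq
  · refine ⟨NormedSpace.normalize d, NormedSpace.norm_normalize_eq_one_iff.mpr h, ?_, ?_⟩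
    · rw [NormedSpace.normalize, real_inner_smul_right, hud, mul_zero]
    · rw [greatCircle, ← hsin, NormedSpace.norm_smul_normalize]
      exact hv_eq

lemma sin_le_inner_of_angle_le {w v : V} (hw : ‖w‖ = 1) (hv : ‖v‖ = 1) {a : ℝ}
    (ha : -(π / 2) ≤ a) (h : angle w v ≤ π / 2 - a) : sin a ≤ ⟪w, v⟫ := by
  rw [inner_eq_cos_angle_of_norm_eq_one hw hv, ← cos_pi_div_two_sub]
  exact cos_le_cos_of_nonneg_of_le_pi (angle_nonneg w v) (by linarith) h

lemma angle_bounds_of_angle_greatCircle_le {u e w : V} (hu : ‖u‖ = 1) (he : ‖e‖ = 1)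
    (hue : ⟪u, e⟫ = 0) {θ α : ℝ} (hθ₀ : 0 ≤ θ) (hθ : θ ≤ π / 2) (hα₀ : 0 < α) (hα₁ : α ≤ 1)
    (hw : angle w (greatCircle u e (5 * α / 12)) ≤ α / 12) :
    (α / 3 ≤ angle u w ∧ angle u w ≤ α / 2) ∧
      angle w (greatCircle u e θ) ≤ π / 2 - α / 3 := by
  set w₀ := greatCircle u e (5 * α / 12)
  have hπ := pi_gt_three
  have hu₀ : greatCircle u e 0 = u := by simp [greatCircle]
  have huw₀ : angle u w₀ = 5 * α / 12 := by
    have h : |0 - 5 * α / 12| = 5 * α / 12 := by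
      rw [zero_sub, abs_neg, abs_of_pos (by positivity)]
    rw [← hu₀, angle_greatCircle hu he hue (by linarith), h]
  have hw₀v : angle w₀ (greatCircle u e θ) ≤ π / 2 - 5 * α / 12 := by
    have h : |5 * α / 12 - θ| ≤ π / 2 - 5 * α / 12 := abs_le.mpr ⟨by linarith, by linarith⟩
    rw [angle_greatCircle hu he hue (by linarith)]
    exact h
  have h₁ := angle_le_angle_add_angle u w₀ w
  have h₂ := angle_le_angle_add_angle u w w₀
  have h₃ := angle_le_angle_add_angle w w₀ (greatCircle u e θ)
  rw [angle_comm w₀ w] at h₁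
  exact ⟨⟨by linarith, by linarith⟩, by linarith⟩

/-- Let `u, v` be unit vectors in `ℝⁿ` (`n ≥ 2`) with `⟨u,v⟩ ≥ 0` and `0 < α ≤ 1`. Then there is
a unit vector `w₀` such that every unit `w` with `angle(w,w₀) ≤ α/12` satisfies
`angle(u,w) ∈ [α/3, α/2]` and `⟨w,v⟩ ≥ sin(α/3)`. -/
theorem stmt_11 {n : ℕ} (hn : 2 ≤ n) (u v : EuclideanSpace ℝ (Fin n))
    (hu : ‖u‖ = 1) (hv : ‖v‖ = 1) (huv : 0 ≤ ⟪u, v⟫)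
    (α : ℝ) (hα₀ : 0 < α) (hα₁ : α ≤ 1) :
    ∃ w₀ : EuclideanSpace ℝ (Fin n), ‖w₀‖ = 1 ∧
      ∀ w : EuclideanSpace ℝ (Fin n), ‖w‖ = 1 → Real.arccos ⟪w, w₀⟫ ≤ α / 12 →
        (α / 3 ≤ Real.arccos ⟪u, w⟫ ∧ Real.arccos ⟪u, w⟫ ≤ α / 2) ∧
        Real.sin (α / 3) ≤ ⟪w, v⟫ := by
  obtain ⟨e₀, he₀, hue₀⟩ :=
    exists_norm_eq_one_inner_eq_zero (by rwa [finrank_euclideanSpace_fin]) u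
  obtain ⟨e, he, hue, hv_eq⟩ := exists_eq_greatCircle_angle hu hv he₀ hue₀
  have hθ : angle u v ≤ π / 2 := by
    rw [← arccos_inner_eq_angle hu hv]
    exact arccos_le_pi_div_two.mpr huv
  have hw₀ := norm_greatCircle hu he hue (5 * α / 12)
  refine ⟨_, hw₀, fun w hw hww₀ => ?_⟩
  rw [arccos_inner_eq_angle hw hw₀] at hww₀
  obtain ⟨hangle_uw, hangle_wv⟩ := angle_bounds_of_angle_greatCircle_le hu he hue
    (angle_nonneg u v) hθ hα₀ hα₁ hww₀
  rw [← hv_eq] at hangle_wv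
  rw [arccos_inner_eq_angle hu hw]
  exact ⟨hangle_uw, sin_le_inner_of_angle_le hw hv (by linarith [pi_pos]) hangle_wv⟩
end

section
/- Suppose f ∈ C^m(ℝⁿ) (m ≥ 2) has bounded derivatives up to order m, satisfies (CW^m) on a compact convex set C ⊂ ℝⁿ, and D^m f is uniformly continuous. Then there exists a nondecreasing continuous function ω : [0,∞) → [0,∞) with ω(0) = 0 such that D²f(x)(v,v) ≥ −ω(d(x,C)) · d(x,C)^{m−2} for all x ∈ ℝⁿ and all unit vectors v. -/
open scoped BigOperators
open Metric Set

theorem iteratedDeriv_comp_line {E F : Type*} [NormedAddCommGroup E] [NormedSpace ℝ E]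
    [NormedAddCommGroup F] [NormedSpace ℝ F] :
    ∀ (j : ℕ) (G : E → F), ContDiff ℝ (j : ℕ∞) G → ∀ (y w : E) (s : ℝ),
      iteratedDeriv j (fun t : ℝ => G (y + t • w)) s
        = iteratedFDeriv ℝ j G (y + s • w) (fun _ => w) := by
  intro j
  induction j with
  | zero => intro G hG y w s; simp
  | succ j IH =>
    intro G hG y w s
    have hline : ∀ t : ℝ, HasDerivAt (fun t : ℝ => y + t • w) w t := fun t => by
      simpa using ((hasDerivAt_id t).smul_const w).const_add y
    have hGd : ContDiff ℝ (j : ℕ∞) (fderiv ℝ G) := hG.fderiv_right (by exact_mod_cast le_rfl)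
    have hG' : ContDiff ℝ (j : ℕ∞) (fun z => fderiv ℝ G z w) :=
      (ContinuousLinearMap.apply ℝ F w).contDiff.comp hGd
    have hderiv : deriv (fun t : ℝ => G (y + t • w)) = fun t => fderiv ℝ G (y + t • w) w := by
      funext t
      exact (((hG.differentiable (by simp)).differentiableAt).hasFDerivAt.comp_hasDerivAt t
        (hline t)).deriv
    rw [iteratedDeriv_succ', hderiv, IH _ hG' y w s]
    have heq : (fun z => fderiv ℝ G z w) = (ContinuousLinearMap.apply ℝ F w) ∘ (fderiv ℝ G) := rfl
    rw [heq, ContinuousLinearMap.iteratedFDeriv_comp_left _ (hGd.contDiffAt (x := y + s • w)) le_rfl,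
      iteratedFDeriv_succ_apply_right]
    rfl

theorem iter_shift {E : Type*} [NormedAddCommGroup E] [NormedSpace ℝ E]
    (l : ℕ) (f : E → ℝ) {N : ℕ} (hf : ContDiff ℝ (N : ℕ∞) f) (hl : l + 2 ≤ N) (v w z : E) :
    iteratedFDeriv ℝ (l + 2) f z (fun i : Fin (l + 2) => if (i : ℕ) < l then w else v)
      = iteratedFDeriv ℝ l
          (fun z => fderiv ℝ (fun z' => fderiv ℝ f z' v) z v) z (fun _ => w) := by
  have hfd : ContDiff ℝ ((N - 1 : ℕ) : ℕ∞) (fderiv ℝ f) :=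
    hf.fderiv_right (by exact_mod_cast (by omega : (N - 1) + 1 ≤ N))
  set g1 : E → ℝ := fun z' => fderiv ℝ f z' v with hg1
  have hg1c : ContDiff ℝ ((N - 1 : ℕ) : ℕ∞) g1 :=
    (ContinuousLinearMap.apply ℝ ℝ v).contDiff.comp hfd
  have hg1d : ContDiff ℝ ((N - 2 : ℕ) : ℕ∞) (fderiv ℝ g1) :=
    hg1c.fderiv_right (by exact_mod_cast (by omega : (N - 2) + 1 ≤ N - 1))
  rw [iteratedFDeriv_succ_apply_right]
  have h1 : (fun i : Fin (l + 1) =>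
      (Fin.init fun i : Fin (l + 2) => if (i : ℕ) < l then w else v) i)
      = fun i : Fin (l + 1) => if (i : ℕ) < l then w else v := by
    funext i; simp [Fin.init, Fin.castSucc]
  rw [show (Fin.init fun i : Fin (l + 2) => if (i : ℕ) < l then w else v)
      = fun i : Fin (l + 1) => if (i : ℕ) < l then w else v from h1]
  simp only [Fin.val_last]
  rw [if_neg (by omega)]
  -- evaluate at v via CLM composition on the left
  have h3 : iteratedFDeriv ℝ (l + 1) (fun y => fderiv ℝ f y) z
        (fun i : Fin (l + 1) => if (i : ℕ) < l then w else v) v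
      = iteratedFDeriv ℝ (l + 1) g1 z
        (fun i : Fin (l + 1) => if (i : ℕ) < l then w else v) := by
    have := (ContinuousLinearMap.apply ℝ ℝ v).iteratedFDeriv_comp_left (hfd.contDiffAt (x := z))
      (i := l + 1) (by exact_mod_cast (by omega : l + 1 ≤ N - 1))
    rw [show (⇑(ContinuousLinearMap.apply ℝ ℝ v) ∘ fderiv ℝ f) = g1 from rfl] at this
    rw [this]; rfl
  rw [h3, iteratedFDeriv_succ_apply_right]
  have h4 : (Fin.init fun i : Fin (l + 1) => if (i : ℕ) < l then w else v)
      = fun _ : Fin l => w := by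
    funext i; simp [Fin.init, Fin.castSucc, i.isLt]
  rw [h4]
  simp only [Fin.val_last]
  rw [if_neg (by omega)]
  have h6 := (ContinuousLinearMap.apply ℝ ℝ v).iteratedFDeriv_comp_left (hg1d.contDiffAt (x := z))
    (i := l) (by exact_mod_cast (by omega : l ≤ N - 2))
  rw [show (⇑(ContinuousLinearMap.apply ℝ ℝ v) ∘ fderiv ℝ g1)
      = fun z => fderiv ℝ g1 z v from rfl] at h6
  rw [h6]; rfl

/-- For a globally `C^N` function, `iteratedDerivWithin` on `Icc` agrees with `iteratedDeriv`. -/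

theorem iteratedDerivWithin_eq_global {g : ℝ → ℝ} {N j : ℕ} (hg : ContDiff ℝ (N : ℕ∞) g)
    (hj : j ≤ N) {a b x : ℝ} (hab : a < b) (hx : x ∈ Set.Icc a b) :
    iteratedDerivWithin j g (Set.Icc a b) x = iteratedDeriv j g x := by
  rw [iteratedDerivWithin_eq_iteratedFDerivWithin, iteratedDeriv_eq_iteratedFDeriv]
  congr 1
  have h := (contDiff_iff_ftaylorSeries.mp hg).hasFTaylorSeriesUpToOn (Set.Icc a b)
  exact (h.eq_iteratedFDerivWithin_of_uniqueDiffOn (by exact_mod_cast hj)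
    (uniqueDiffOn_Icc hab) hx).symm

theorem key {n : ℕ} (C : Set (EuclideanSpace ℝ (Fin n))) (hCc : IsCompact C) (hCne : C.Nonempty)
    (m' : ℕ) (f : EuclideanSpace ℝ (Fin n) → ℝ) (hf : ContDiff ℝ ((m' + 2 : ℕ) : ℕ∞) f)
    (hucont : UniformContinuous (iteratedFDeriv ℝ (m' + 2) f))
    (hcw : CW (m' + 2) f C) {ε : ℝ} (hε : 0 < ε) :
    ∃ δ > (0:ℝ), ∀ x v, ‖v‖ = 1 → 0 < infDist x C → infDist x C ≤ δ →
      -(iteratedFDeriv ℝ 2 f x (fun _ => v)) ≤ ε * (infDist x C) ^ m' := by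
  classical
  obtain ⟨tε, htε, hcw'⟩ := hcw (ε / 2) (by linarith)
  obtain ⟨δ₂, hδ₂, hδ₂'⟩ := Metric.uniformContinuous_iff.mp hucont (ε / 2) (by linarith)
  refine ⟨min tε (δ₂ / 2), by positivity, ?_⟩
  intro x v hv hd0 hdle
  set d := infDist x C with hd
  obtain ⟨y, hyC, hyd⟩ := hCc.exists_infDist_eq_dist hCne x
  have hdy : d = ‖x - y‖ := by rw [hd, hyd, dist_eq_norm]
  set w : EuclideanSpace ℝ (Fin n) := d⁻¹ • (x - y) with hw
  have hwn : ‖w‖ = 1 := by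
    rw [hw, norm_smul, ← hdy, norm_inv, Real.norm_eq_abs, abs_of_pos hd0,
      inv_mul_cancel₀ hd0.ne']
  have hxy : y + d • w = x := by
    rw [hw, smul_smul, mul_inv_cancel₀ hd0.ne', one_smul]; abel
  -- smoothness
  have hfd : ContDiff ℝ ((m' + 1 : ℕ) : ℕ∞) (fderiv ℝ f) :=
    hf.fderiv_right (by exact_mod_cast le_rfl)
  have hg1c : ContDiff ℝ ((m' + 1 : ℕ) : ℕ∞) (fun z' => fderiv ℝ f z' v) :=
    (ContinuousLinearMap.apply ℝ ℝ v).contDiff.comp hfd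
  have hg1d : ContDiff ℝ ((m' : ℕ) : ℕ∞) (fderiv ℝ (fun z' => fderiv ℝ f z' v)) :=
    hg1c.fderiv_right (by exact_mod_cast le_rfl)
  have hg2c : ContDiff ℝ ((m' : ℕ) : ℕ∞) (fun z => fderiv ℝ (fun z' => fderiv ℝ f z' v) z v) :=
    (ContinuousLinearMap.apply ℝ ℝ v).contDiff.comp hg1d
  have hhc : ContDiff ℝ ((m' : ℕ) : ℕ∞)
      (fun t : ℝ => fderiv ℝ (fun z' => fderiv ℝ f z' v) (y + t • w) v) :=
    hg2c.comp (contDiff_const.add (contDiff_id.smul contDiff_const))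
  -- derivative identification along the line
  have A : ∀ j, j ≤ m' → ∀ t : ℝ,
      iteratedDeriv j (fun t : ℝ => fderiv ℝ (fun z' => fderiv ℝ f z' v) (y + t • w) v) t
        = iteratedFDeriv ℝ (j + 2) f (y + t • w)
            (fun i : Fin (j + 2) => if (i : ℕ) < j then w else v) := by
    intro j hj t
    exact (iteratedDeriv_comp_line j _ (hg2c.of_le (by exact_mod_cast hj)) y w t).trans
      (iter_shift j f hf (by omega) v w (y + t • w)).symm
  -- norms of the argument tuples
  have hargnorm : ∀ (j l : ℕ) (i : Fin l),
      ‖(fun i : Fin l => if (i : ℕ) < j then w else v) i‖ = 1 := by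
    intro j l i; by_cases hi : (i : ℕ) < j <;> simp [hi, hv, hwn]
  -- difference bound from uniform continuity
  have hdiffbound : ∀ (a b : EuclideanSpace ℝ (Fin n)) (args : Fin (m' + 2) → _),
      (∀ i, ‖args i‖ = 1) → dist a b < δ₂ →
      |iteratedFDeriv ℝ (m' + 2) f a args - iteratedFDeriv ℝ (m' + 2) f b args| ≤ ε / 2 := by
    intro a b args hargs hab
    have h1 := hδ₂' hab
    have h2 : iteratedFDeriv ℝ (m' + 2) f a args - iteratedFDeriv ℝ (m' + 2) f b args
        = (iteratedFDeriv ℝ (m' + 2) f a - iteratedFDeriv ℝ (m' + 2) f b) args := by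
      simp [ContinuousMultilinearMap.sub_apply]
    rw [h2]
    calc |(iteratedFDeriv ℝ (m' + 2) f a - iteratedFDeriv ℝ (m' + 2) f b) args|
        ≤ ‖iteratedFDeriv ℝ (m' + 2) f a - iteratedFDeriv ℝ (m' + 2) f b‖ * ∏ i, ‖args i‖ :=
          (iteratedFDeriv ℝ (m' + 2) f a - iteratedFDeriv ℝ (m' + 2) f b).le_opNorm args
      _ = ‖iteratedFDeriv ℝ (m' + 2) f a - iteratedFDeriv ℝ (m' + 2) f b‖ := by
          simp [hargs]
      _ ≤ ε / 2 := by rw [← dist_eq_norm]; exact h1.le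
  -- CW bound
  have hcw2 : -(ε / 2) * d ^ m' ≤ cwSum (m' + 2) f y v w d := by
    have := hcw' y hyC v w hv hwn d hd0 (le_trans hdle (min_le_left _ _))
    simpa using this
  -- cwSum as sum of line derivatives
  have hsum : cwSum (m' + 2) f y v w d = ∑ j ∈ Finset.range (m' + 1),
      d ^ j / (Nat.factorial j) *
        iteratedDeriv j (fun t : ℝ => fderiv ℝ (fun z' => fderiv ℝ f z' v) (y + t • w) v) 0 := by
    rw [cwSum]
    refine Finset.sum_nbij' (fun k => k - 2) (fun j => j + 2) ?_ ?_ ?_ ?_ ?_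
    · intro a ha; simp only [Finset.mem_Icc] at ha; simp only [Finset.mem_range]; omega
    · intro a ha; simp only [Finset.mem_range] at ha; simp only [Finset.mem_Icc]; omega
    · intro a ha; simp only [Finset.mem_Icc] at ha; show a - 2 + 2 = a; omega
    · intro a ha; show a + 2 - 2 = a; omega
    · intro a ha
      simp only [Finset.mem_Icc] at ha
      obtain ⟨j, rfl⟩ : ∃ j, a = j + 2 := ⟨a - 2, by omega⟩
      have hA := A j (by omega) 0
      simp only [zero_smul, add_zero] at hA
      simp only [Nat.add_sub_cancel, hA]
  -- value at x
  have hvalx : iteratedFDeriv ℝ 2 f x (fun _ => v)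
      = iteratedDeriv 0 (fun t : ℝ => fderiv ℝ (fun z' => fderiv ℝ f z' v) (y + t • w) v) d := by
    have hA := A 0 (Nat.zero_le _) d
    rw [hxy] at hA
    have hargs2 : (fun i : Fin (0 + 2) => if (i : ℕ) < 0 then w else v)
        = (fun _ => v) := by funext i; simp
    rw [hargs2] at hA
    exact hA.symm
  rcases Nat.eq_zero_or_pos m' with hm0 | hm1
  · -- m = 2 case
    subst hm0
    have hA0 := A 0 le_rfl 0
    simp only [zero_smul, add_zero] at hA0
    have hAd := A 0 le_rfl d
    rw [hxy] at hAd
    rw [hsum] at hcw2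
    simp only [zero_add, Finset.sum_range_one, pow_zero, Nat.factorial_zero, Nat.cast_one, div_one,
      one_mul, mul_one] at hcw2 ⊢
    have hdist : dist x y < δ₂ := by
      rw [← hyd, ← hd]
      calc d ≤ δ₂ / 2 := le_trans hdle (min_le_right _ _)
        _ < δ₂ := by linarith
    have hb := hdiffbound x y _ (fun i => hargnorm 0 _ i) hdist
    rw [← hAd, ← hA0] at hb
    have hb' := (abs_le.mp hb).1
    rw [hvalx]
    linarith
  · -- m ≥ 3 case
    obtain ⟨l, rfl⟩ : ∃ l, m' = l + 1 := ⟨m' - 1, by omega⟩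
    have hcont_on : ContDiffOn ℝ ((l : ℕ) : ℕ∞)
        (fun t : ℝ => fderiv ℝ (fun z' => fderiv ℝ f z' v) (y + t • w) v) (Icc 0 d) :=
      (hhc.of_le (by exact_mod_cast Nat.le_succ l)).contDiffOn
    have Weq : ∀ j, j ≤ l + 1 → ∀ z ∈ Icc (0:ℝ) d,
        iteratedDerivWithin j
          (fun t : ℝ => fderiv ℝ (fun z' => fderiv ℝ f z' v) (y + t • w) v) (Icc 0 d) z
        = iteratedDeriv j
          (fun t : ℝ => fderiv ℝ (fun z' => fderiv ℝ f z' v) (y + t • w) v) z :=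
      fun j hj z hz => iteratedDerivWithin_eq_global hhc hj hd0 hz
    have hdiffOn : DifferentiableOn ℝ (iteratedDerivWithin l
        (fun t : ℝ => fderiv ℝ (fun z' => fderiv ℝ f z' v) (y + t • w) v) (Icc 0 d))
        (Ioo 0 d) :=
      ((hhc.differentiable_iteratedDeriv l
        (by exact_mod_cast Nat.lt_succ_self l)).differentiableOn).congr
        (fun z hz => Weq l (Nat.le_succ l) z (Ioo_subset_Icc_self hz))
    have htl := taylor_mean_remainder_lagrange (x₀ := 0) (x := d) (n := l)
      (f := fun t : ℝ => fderiv ℝ (fun z' => fderiv ℝ f z' v) (y + t • w) v) hd0.ne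
      (by rw [uIcc_of_le hd0.le]; exact_mod_cast hcont_on)
      (by rw [uIcc_of_le hd0.le, uIoo_of_le hd0.le]; exact hdiffOn)
    rw [uIcc_of_le hd0.le, uIoo_of_le hd0.le] at htl
    obtain ⟨x', hx', htay⟩ := htl
    rw [taylor_within_apply] at htay
    have h0mem : (0:ℝ) ∈ Icc (0:ℝ) d := left_mem_Icc.mpr hd0.le
    have hx'mem : x' ∈ Icc (0:ℝ) d := Ioo_subset_Icc_self hx'
    rw [Weq (l+1) le_rfl x' hx'mem] at htay
    have hTsum : (∑ k ∈ Finset.range (l+1), (((k.factorial : ℝ))⁻¹ * (d - 0)^k) •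
          iteratedDerivWithin k
            (fun t : ℝ => fderiv ℝ (fun z' => fderiv ℝ f z' v) (y + t • w) v) (Icc 0 d) 0)
        = ∑ k ∈ Finset.range (l+1), d^k / (k.factorial : ℝ) *
          iteratedDeriv k (fun t : ℝ => fderiv ℝ (fun z' => fderiv ℝ f z' v) (y + t • w) v) 0 := by
      refine Finset.sum_congr rfl (fun k hk => ?_)
      rw [Weq k (by simp only [Finset.mem_range] at hk; omega) 0 h0mem, smul_eq_mul, sub_zero]
      ring
    rw [hTsum] at htay
    rw [Finset.sum_range_succ] at hsum
    have hb : |iteratedDeriv (l+1)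
          (fun t : ℝ => fderiv ℝ (fun z' => fderiv ℝ f z' v) (y + t • w) v) x'
        - iteratedDeriv (l+1)
          (fun t : ℝ => fderiv ℝ (fun z' => fderiv ℝ f z' v) (y + t • w) v) 0| ≤ ε/2 := by
      rw [A (l+1) le_rfl x', A (l+1) le_rfl 0]
      simp only [zero_smul, add_zero]
      refine hdiffbound _ _ _ (fun i => hargnorm _ _ i) ?_
      rw [dist_eq_norm]
      have : y + x' • w - y = x' • w := by abel
      rw [this, norm_smul, hwn, mul_one, Real.norm_eq_abs, abs_of_pos hx'.1]
      calc x' < d := hx'.2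
        _ ≤ δ₂ / 2 := le_trans hdle (min_le_right _ _)
        _ < δ₂ := by linarith
    -- arithmetic
    set S := ∑ k ∈ Finset.range (l+1), d^k / (k.factorial : ℝ) *
      iteratedDeriv k (fun t : ℝ => fderiv ℝ (fun z' => fderiv ℝ f z' v) (y + t • w) v) 0 with hS
    set a := iteratedDeriv (l+1)
      (fun t : ℝ => fderiv ℝ (fun z' => fderiv ℝ f z' v) (y + t • w) v) 0 with ha
    set c := iteratedDeriv (l+1)
      (fun t : ℝ => fderiv ℝ (fun z' => fderiv ℝ f z' v) (y + t • w) v) x' with hc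
    have hF1 : (1:ℝ) ≤ ((l+1).factorial : ℝ) := by
      exact_mod_cast Nat.one_le_iff_ne_zero.mpr (Nat.factorial_ne_zero _)
    have hD0 : (0:ℝ) < d ^ (l+1) := pow_pos hd0 _
    have hDF : d ^ (l+1) / ((l+1).factorial : ℝ) ≤ d ^ (l+1) := div_le_self hD0.le hF1
    have h1 : -(ε/2) ≤ c - a := (abs_le.mp hb).1
    have h3 : -(ε/2) * (d ^ (l+1) / ((l+1).factorial : ℝ))
        ≤ (c - a) * (d ^ (l+1) / ((l+1).factorial : ℝ)) :=
      mul_le_mul_of_nonneg_right h1 (by positivity)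
    have h4 : (ε/2) * (d ^ (l+1) / ((l+1).factorial : ℝ)) ≤ (ε/2) * d ^ (l+1) :=
      mul_le_mul_of_nonneg_left hDF (by linarith)
    have hval' : iteratedFDeriv ℝ 2 f x (fun _ => v)
        = (fun t : ℝ => fderiv ℝ (fun z' => fderiv ℝ f z' v) (y + t • w) v) d := by
      rw [hvalx, iteratedDeriv_zero]
    have hkey : (fun t : ℝ => fderiv ℝ (fun z' => fderiv ℝ f z' v) (y + t • w) v) d
        = cwSum (l+1+2) f y v w d + (c - a) * (d ^ (l+1) / ((l+1).factorial : ℝ)) := by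
      simp only [sub_zero] at htay
      linear_combination htay - hsum
    rw [hval', hkey]
    linarith

theorem nonnegC {n : ℕ} (C : Set (EuclideanSpace ℝ (Fin n))) (m : ℕ) (hm : 2 ≤ m)
    (f : EuclideanSpace ℝ (Fin n) → ℝ)
    (hbd : ∀ k ≤ m, ∃ M : ℝ, ∀ x, ‖iteratedFDeriv ℝ k f x‖ ≤ M)
    (hcw : CW m f C) :
    ∀ y ∈ C, ∀ v, ‖v‖ = 1 → 0 ≤ iteratedFDeriv ℝ 2 f y (fun _ => v) := by
  classical
  intro y hyC v hv
  choose M hM using hbd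
  set gb : ℕ → ℝ := fun k => if h : k ≤ m then max 0 (M k h) else 0 with hgb
  have hgbnn : ∀ k, 0 ≤ gb k := by
    intro k; rw [hgb]; dsimp only; split
    · exact le_max_left _ _
    · exact le_rfl
  have hgbd : ∀ k, k ≤ m → ∀ x, ‖iteratedFDeriv ℝ k f x‖ ≤ gb k := by
    intro k hk x; rw [hgb]; dsimp only; rw [dif_pos hk]
    exact le_trans (hM k hk x) (le_max_right _ _)
  set B := ∑ k ∈ Finset.Icc 2 m, gb k with hB
  have hB0 : 0 ≤ B := Finset.sum_nonneg (fun k _ => hgbnn k)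
  have hmain : ∀ ε > (0:ℝ), -ε ≤ iteratedFDeriv ℝ 2 f y (fun _ => v) := by
    intro ε hε
    obtain ⟨tε, htε, hcw'⟩ := hcw (ε / 2) (by linarith)
    set t := min (min tε 1) ((ε / 2) / (B + 1)) with hT
    have ht0 : 0 < t := by
      apply lt_min (lt_min htε one_pos)
      positivity
    have ht1 : t ≤ 1 := le_trans (min_le_left _ _) (min_le_right _ _)
    have htε' : t ≤ tε := le_trans (min_le_left _ _) (min_le_left _ _)
    have htB : t * B ≤ ε / 2 := by
      have h1 : t ≤ (ε / 2) / (B + 1) := min_le_right _ _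
      have h2 : t * B ≤ ((ε / 2) / (B + 1)) * B :=
        mul_le_mul_of_nonneg_right h1 hB0
      have h3 : ((ε / 2) / (B + 1)) * B ≤ ε / 2 := by
        rw [div_mul_eq_mul_div, div_le_iff₀ (by linarith)]
        nlinarith
      linarith
    have hcw2 := hcw' y hyC v v hv hv t ht0 htε'
    have hpow : t ^ (m - 2) ≤ 1 := pow_le_one₀ ht0.le ht1
    have hlow : -(ε / 2) ≤ cwSum m f y v v t := by
      have : -(ε / 2) * t ^ (m - 2) ≤ cwSum m f y v v t := hcw2
      nlinarith
    -- split the sum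
    have h2mem : 2 ∈ Finset.Icc 2 m := by simp [hm]
    have hsplit : cwSum m f y v v t
        = iteratedFDeriv ℝ 2 f y (fun _ => v)
          + ∑ k ∈ (Finset.Icc 2 m).erase 2,
              t ^ (k - 2) / ((k - 2).factorial : ℝ) *
                iteratedFDeriv ℝ k f y (fun _ => v) := by
      rw [cwSum]
      simp only [ite_self]
      rw [← Finset.add_sum_erase _ _ h2mem]
      norm_num
    have hterm : ∀ k ∈ (Finset.Icc 2 m).erase 2,
        |t ^ (k - 2) / ((k - 2).factorial : ℝ) * iteratedFDeriv ℝ k f y (fun _ => v)|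
          ≤ t * gb k := by
      intro k hk
      simp only [Finset.mem_erase, Finset.mem_Icc] at hk
      have hkm : k ≤ m := hk.2.2
      have hk2 : k - 2 ≠ 0 := by omega
      have h1 : |iteratedFDeriv ℝ k f y (fun _ => v)| ≤ gb k := by
        calc |iteratedFDeriv ℝ k f y (fun _ => v)|
            ≤ ‖iteratedFDeriv ℝ k f y‖ * ∏ _i : Fin k, ‖v‖ :=
              (iteratedFDeriv ℝ k f y).le_opNorm _
          _ = ‖iteratedFDeriv ℝ k f y‖ := by simp [hv]
          _ ≤ gb k := hgbd k hkm y
      have h2 : t ^ (k - 2) / ((k - 2).factorial : ℝ) ≤ t := by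
        calc t ^ (k - 2) / ((k - 2).factorial : ℝ) ≤ t ^ (k - 2) := by
              apply div_le_self (pow_nonneg ht0.le _)
              exact_mod_cast Nat.one_le_iff_ne_zero.mpr (Nat.factorial_ne_zero _)
          _ ≤ t := pow_le_of_le_one ht0.le ht1 hk2
      calc |t ^ (k - 2) / ((k - 2).factorial : ℝ) * iteratedFDeriv ℝ k f y (fun _ => v)|
          = (t ^ (k - 2) / ((k - 2).factorial : ℝ)) * |iteratedFDeriv ℝ k f y (fun _ => v)| := by
            rw [abs_mul, abs_of_nonneg (by positivity)]
        _ ≤ t * gb k := mul_le_mul h2 h1 (abs_nonneg _) ht0.le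
    have hR : |∑ k ∈ (Finset.Icc 2 m).erase 2,
        t ^ (k - 2) / ((k - 2).factorial : ℝ) * iteratedFDeriv ℝ k f y (fun _ => v)|
          ≤ t * B := by
      calc |∑ k ∈ (Finset.Icc 2 m).erase 2,
            t ^ (k - 2) / ((k - 2).factorial : ℝ) * iteratedFDeriv ℝ k f y (fun _ => v)|
          ≤ ∑ k ∈ (Finset.Icc 2 m).erase 2,
            |t ^ (k - 2) / ((k - 2).factorial : ℝ) * iteratedFDeriv ℝ k f y (fun _ => v)| :=
            Finset.abs_sum_le_sum_abs _ _
        _ ≤ ∑ k ∈ (Finset.Icc 2 m).erase 2, t * gb k := Finset.sum_le_sum hterm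
        _ = t * ∑ k ∈ (Finset.Icc 2 m).erase 2, gb k := by rw [Finset.mul_sum]
        _ ≤ t * B := by
            apply mul_le_mul_of_nonneg_left ?_ ht0.le
            exact Finset.sum_le_sum_of_subset_of_nonneg (Finset.erase_subset _ _)
              (fun k _ _ => hgbnn k)
    have := (abs_le.mp hR).2
    have := (abs_le.mp hR).1
    rw [hsplit] at hlow
    linarith
  by_contra hneg
  push_neg at hneg
  have := hmain (-(iteratedFDeriv ℝ 2 f y (fun _ => v)) / 2) (by linarith)
  linarith

/-- If `f ∈ Cᵐ(ℝⁿ)` (`m ≥ 2`) has bounded derivatives up to order `m`, `Dᵐf` is uniformly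
continuous, and `f` satisfies `(CWᵐ)` on a compact convex set `C`, then there is a
nondecreasing continuous `ω : [0,∞) → [0,∞)` with `ω(0) = 0` such that
`D²f(x)(v,v) ≥ -ω(d(x,C)) d(x,C)^{m-2}` for all `x` and unit `v`. -/
theorem stmt_12 {n : ℕ} (C : Set (EuclideanSpace ℝ (Fin n))) (hCc : IsCompact C)
    (hCconv : Convex ℝ C) (hCne : C.Nonempty) (m : ℕ) (hm : 2 ≤ m)
    (f : EuclideanSpace ℝ (Fin n) → ℝ) (hf : ContDiff ℝ (m : ℕ∞) f)
    (hbd : ∀ k ≤ m, ∃ M : ℝ, ∀ x, ‖iteratedFDeriv ℝ k f x‖ ≤ M)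
    (hucont : UniformContinuous (iteratedFDeriv ℝ m f))
    (hcw : CW m f C) :
    ∃ ω : ℝ → ℝ, ContinuousOn ω (Set.Ici 0) ∧ MonotoneOn ω (Set.Ici 0) ∧ ω 0 = 0 ∧
      (∀ t ∈ Set.Ici (0:ℝ), 0 ≤ ω t) ∧
      ∀ x : EuclideanSpace ℝ (Fin n), ∀ v : EuclideanSpace ℝ (Fin n), ‖v‖ = 1 →
        -(ω (Metric.infDist x C)) * (Metric.infDist x C) ^ (m - 2) ≤
          iteratedFDeriv ℝ 2 f x (fun _ => v) := by
  classical
  have hNC := nonnegC C m hm f hbd hcw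
  obtain ⟨m', rfl⟩ : ∃ m', m = m' + 2 := ⟨m - 2, by omega⟩
  have key' : ∀ ε : ℝ, 0 < ε → ∃ δ > (0:ℝ), ∀ x v, ‖v‖ = 1 → 0 < infDist x C →
      infDist x C ≤ δ →
      -(iteratedFDeriv ℝ 2 f x (fun _ => v)) ≤ ε * (infDist x C) ^ m' :=
    fun ε hε => key C hCc hCne m' f hf hucont hcw hε
  -- global bound on the second derivative
  obtain ⟨M₂, hM₂⟩ := hbd 2 (by omega)
  have hM₂0 : 0 ≤ M₂ := le_trans (norm_nonneg _) (hM₂ 0)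
  have hvalbd : ∀ x v, ‖v‖ = 1 → -(iteratedFDeriv ℝ 2 f x (fun _ => v)) ≤ M₂ := by
    intro x v hv
    have h1 : |iteratedFDeriv ℝ 2 f x (fun _ => v)|
        ≤ ‖iteratedFDeriv ℝ 2 f x‖ * ∏ _i : Fin 2, ‖v‖ :=
      (iteratedFDeriv ℝ 2 f x).le_opNorm _
    simp only [hv, Finset.prod_const_one, mul_one] at h1
    have := (abs_le.mp h1).1
    have := hM₂ x
    linarith
  obtain ⟨δ₁, hδ₁0, hδ₁⟩ := key' 1 one_pos
  set K := max 1 (M₂ / δ₁ ^ m') with hK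
  set S : ℝ → Set ℝ := fun s => {r | ∃ x v, ‖v‖ = 1 ∧ 0 < infDist x C ∧ infDist x C ≤ s ∧
      r = -(iteratedFDeriv ℝ 2 f x (fun _ => v)) / (infDist x C) ^ m'} with hS
  have hSbound : ∀ s : ℝ, ∀ r ∈ insert (0:ℝ) (S s), r ≤ K := by
    intro s r hr
    rcases Set.mem_insert_iff.mp hr with rfl | hr
    · exact le_trans zero_le_one (le_max_left _ _)
    · obtain ⟨x, v, hv, hd0, hds, rfl⟩ := hr
      by_cases hcase : infDist x C ≤ δ₁
      · have h1 := hδ₁ x v hv hd0 hcase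
        have h2 : -(iteratedFDeriv ℝ 2 f x (fun _ => v)) / (infDist x C) ^ m' ≤ 1 := by
          rw [div_le_one (pow_pos hd0 _)]
          linarith
        exact le_trans h2 (le_max_left _ _)
      · push_neg at hcase
        have h1 := hvalbd x v hv
        have h2 : δ₁ ^ m' ≤ (infDist x C) ^ m' := pow_le_pow_left₀ hδ₁0.le hcase.le _
        have h3 : -(iteratedFDeriv ℝ 2 f x (fun _ => v)) / (infDist x C) ^ m'
            ≤ M₂ / δ₁ ^ m' := div_le_div₀ hM₂0 h1 (pow_pos hδ₁0 _) h2
        exact le_trans h3 (le_max_right _ _)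
  have hbdd : ∀ s : ℝ, BddAbove (insert (0:ℝ) (S s)) :=
    fun s => ⟨K, fun r hr => hSbound s r hr⟩
  set g : ℝ → ℝ := fun s => sSup (insert 0 (S s)) with hg
  have hgmono : Monotone g := by
    intro s s' hss'
    refine csSup_le_csSup (hbdd s') ⟨0, Set.mem_insert _ _⟩ ?_
    apply Set.insert_subset_insert
    rintro r ⟨x, v, h1, h2, h3, h4⟩
    exact ⟨x, v, h1, h2, le_trans h3 hss', h4⟩
  have hgnn : ∀ s, 0 ≤ g s := fun s => le_csSup (hbdd s) (Set.mem_insert _ _)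
  have hg0 : g 0 = 0 := by
    have hempty : S 0 = ∅ := by
      ext r
      simp only [hS, Set.mem_setOf_eq, Set.mem_empty_iff_false, iff_false]
      rintro ⟨x, v, _, h2, h3, _⟩
      linarith
    rw [hg]
    dsimp only
    rw [hempty]
    simp
  have hgdom : ∀ x v, ‖v‖ = 1 → 0 < infDist x C →
      -(iteratedFDeriv ℝ 2 f x (fun _ => v)) ≤ g (infDist x C) * (infDist x C) ^ m' := by
    intro x v hv hd0
    have hmem : -(iteratedFDeriv ℝ 2 f x (fun _ => v)) / (infDist x C) ^ m' ∈ S (infDist x C) :=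
      ⟨x, v, hv, hd0, le_rfl, rfl⟩
    have h1 : -(iteratedFDeriv ℝ 2 f x (fun _ => v)) / (infDist x C) ^ m' ≤ g (infDist x C) :=
      le_csSup (hbdd _) (Set.mem_insert_of_mem _ hmem)
    have h2 : (0:ℝ) < (infDist x C) ^ m' := pow_pos hd0 _
    calc -(iteratedFDeriv ℝ 2 f x (fun _ => v))
        = -(iteratedFDeriv ℝ 2 f x (fun _ => v)) / (infDist x C) ^ m' * (infDist x C) ^ m' := by
          field_simp
      _ ≤ g (infDist x C) * (infDist x C) ^ m' := mul_le_mul_of_nonneg_right h1 h2.le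
  have hgsmall : ∀ ε > (0:ℝ), ∃ δ > (0:ℝ), ∀ s ≤ δ, g s ≤ ε := by
    intro ε hε
    obtain ⟨δ, hδ0, hδ⟩ := key' ε hε
    refine ⟨δ, hδ0, fun s hs => ?_⟩
    refine Real.sSup_le ?_ hε.le
    intro r hr
    rcases Set.mem_insert_iff.mp hr with rfl | hr
    · exact hε.le
    · obtain ⟨x, v, hv, hd0, hds, rfl⟩ := hr
      rw [div_le_iff₀ (pow_pos hd0 _)]
      exact hδ x v hv hd0 (le_trans hds hs)
  -- the modulus
  set ω : ℝ → ℝ := fun t => ∫ u in (1:ℝ)..2, g (t * u) with hω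
  have hInt : ∀ t : ℝ, 0 ≤ t →
      IntervalIntegrable (fun u => g (t * u)) MeasureTheory.volume 1 2 := by
    intro t ht
    have : Monotone fun u => g (t * u) :=
      fun a b hab => hgmono (mul_le_mul_of_nonneg_left hab ht)
    exact this.intervalIntegrable
  have hωmono : MonotoneOn ω (Set.Ici 0) := by
    intro t ht t' ht' htt'
    refine intervalIntegral.integral_mono_on one_le_two (hInt t ht) (hInt t' ht') ?_
    intro u hu
    exact hgmono (mul_le_mul_of_nonneg_right htt' (le_trans zero_le_one hu.1))
  have hωnn : ∀ t ∈ Set.Ici (0:ℝ), 0 ≤ ω t := by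
    intro t ht
    exact intervalIntegral.integral_nonneg one_le_two (fun u _ => hgnn _)
  have hω0 : ω 0 = 0 := by
    rw [hω]
    simp only [zero_mul, hg0]
    simp
  have hgle : ∀ t, 0 ≤ t → g t ≤ ω t := by
    intro t ht
    have h1 : (∫ _u in (1:ℝ)..2, g t) = g t := by simp; ring
    rw [← h1]
    refine intervalIntegral.integral_mono_on one_le_two intervalIntegrable_const (hInt t ht) ?_
    intro u hu
    exact hgmono (le_mul_of_one_le_right ht hu.1)
  have hωub : ∀ t, 0 ≤ t → ω t ≤ g (2 * t) := by
    intro t ht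
    have h1 : (∫ _u in (1:ℝ)..2, g (2 * t)) = g (2 * t) := by simp; ring
    rw [← h1]
    refine intervalIntegral.integral_mono_on one_le_two (hInt t ht) intervalIntegrable_const ?_
    intro u hu
    refine hgmono ?_
    calc t * u ≤ t * 2 := mul_le_mul_of_nonneg_left hu.2 ht
      _ = 2 * t := mul_comm _ _
  have hωcont : ContinuousOn ω (Set.Ici 0) := by
    intro t ht
    rcases eq_or_lt_of_le (Set.mem_Ici.mp ht : (0:ℝ) ≤ t) with rfl | htpos
    · -- continuity at 0 within Ici 0
      have hup : Filter.Tendsto (fun t => g (2 * t)) (nhdsWithin 0 (Set.Ici 0)) (nhds 0) := by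
        rw [Metric.tendsto_nhdsWithin_nhds]
        intro ε hε
        obtain ⟨δ, hδ0, hδ⟩ := hgsmall (ε / 2) (by linarith)
        refine ⟨δ / 2, by linarith, ?_⟩
        intro s hs hdist
        rw [Real.dist_eq, sub_zero] at hdist ⊢
        have hs0 : 0 ≤ s := hs
        have : g (2 * s) ≤ ε / 2 := hδ _ (by rw [abs_of_nonneg hs0] at hdist; linarith)
        rw [abs_of_nonneg (hgnn _)]
        linarith
      have hlow : Filter.Tendsto (fun _ : ℝ => (0:ℝ)) (nhdsWithin 0 (Set.Ici 0)) (nhds 0) :=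
        tendsto_const_nhds
      have : Filter.Tendsto ω (nhdsWithin 0 (Set.Ici 0)) (nhds 0) := by
        refine tendsto_of_tendsto_of_tendsto_of_le_of_le' hlow hup ?_ ?_
        · filter_upwards [self_mem_nhdsWithin] with s hs
          exact hωnn s hs
        · filter_upwards [self_mem_nhdsWithin] with s hs
          exact hωub s hs
      unfold ContinuousWithinAt
      rw [hω0]
      exact this
    · -- continuity at t > 0
      have hG : Continuous fun u : ℝ => ∫ s in (0:ℝ)..u, g s :=
        intervalIntegral.continuous_primitive (fun a b => hgmono.intervalIntegrable) 0
      have hform : ∀ t' ∈ Set.Ioi (0:ℝ), ω t'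
          = t'⁻¹ * ((∫ s in (0:ℝ)..(t' * 2), g s) - ∫ s in (0:ℝ)..t', g s) := by
        intro t' ht'
        have ht'0 : (0:ℝ) < t' := ht'
        rw [hω]
        dsimp only
        rw [intervalIntegral.integral_comp_mul_left g ht'0.ne']
        have hsub : (∫ s in (0:ℝ)..(t' * 2), g s) - (∫ s in (0:ℝ)..t', g s)
            = ∫ s in (t' * 1)..(t' * 2), g s := by
          rw [mul_one]
          exact intervalIntegral.integral_interval_sub_left
            hgmono.intervalIntegrable hgmono.intervalIntegrable
        rw [hsub, smul_eq_mul]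
      have hCA : ContinuousAt
          (fun t' => t'⁻¹ * ((∫ s in (0:ℝ)..(t' * 2), g s) - ∫ s in (0:ℝ)..t', g s)) t := by
        apply ContinuousAt.mul
        · exact (continuousAt_id.inv₀ (ne_of_gt htpos))
        · exact ((hG.comp (continuous_id.mul continuous_const)).sub hG).continuousAt
      have heq : ω =ᶠ[nhds t]
          (fun t' => t'⁻¹ * ((∫ s in (0:ℝ)..(t' * 2), g s) - ∫ s in (0:ℝ)..t', g s)) :=
        Filter.eventuallyEq_of_mem (isOpen_Ioi.mem_nhds htpos) hform
      exact (hCA.congr heq.symm).continuousWithinAt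
  refine ⟨ω, hωcont, hωmono, hω0, hωnn, ?_⟩
  intro x v hv
  simp only [Nat.add_sub_cancel]
  rcases (Metric.infDist_nonneg : 0 ≤ infDist x C).eq_or_lt with heq | hlt
  · have hx : x ∈ C := (hCc.isClosed.mem_iff_infDist_zero hCne).mpr heq.symm
    rw [← heq, hω0]
    simp only [neg_zero, zero_mul]
    exact hNC x hx v hv
  · have h1 := hgdom x v hv hlt
    have h2 : g (infDist x C) ≤ ω (infDist x C) := hgle _ hlt.le
    have h3 : -(iteratedFDeriv ℝ 2 f x (fun _ => v)) ≤ ω (infDist x C) * (infDist x C) ^ m' :=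
      le_trans h1 (mul_le_mul_of_nonneg_right h2 (pow_nonneg Metric.infDist_nonneg _))
    linarith
end

section
/- Let ψ : ℝⁿ → ℝ be convex of class C² with D²ψ ≥ M·Id for some M > 0, C = ψ^{−1}((−∞,1]) with nonempty interior. Then there exists β > 0 such that ψ(x) − 1 ≥ β · d(x,C) for every x ∉ C. -/
/-!
Along every line, `ψ(a + t v) - M t² / 2` is a convex function of `t`, so
`ψ(a + h) ≥ ψ(a) + Dψ(a) h + (M/2)‖h‖²`. At a point `x₀` of the interior of `C` this forces
`ψ(x₀) < 1`, and it bounds the slope `(ψ x - ψ x₀) / ‖x - x₀‖` below by some `β > 0` for all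
`x ∉ C`: near `x₀` because `ψ x - ψ x₀ > 1 - ψ x₀`, far from `x₀` because the quadratic term wins.
By convexity the point of the segment `[x, x₀]` at fraction `(ψ x - 1) / (ψ x - ψ x₀)` lies in
`C`, whence `β d(x, C) ≤ ψ x - 1`.
-/

open Metric Set

theorem taylor_lower_bound_of_le_deriv2 {g g' g'' : ℝ → ℝ} {m : ℝ}
    (hg : ∀ t, HasDerivAt g (g' t) t) (hg' : ∀ t, HasDerivAt g' (g'' t) t)
    (hm : ∀ t, m ≤ g'' t) (x y : ℝ) :
    g x + g' x * (y - x) + m / 2 * (y - x) ^ 2 ≤ g y := by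
  have hφ : ∀ t, HasDerivAt (fun t => g t - m / 2 * t ^ 2) (g' t - m * t) t := fun t =>
    ((hg t).sub ((hasDerivAt_pow 2 t).const_mul (m / 2))).congr_deriv (by ring)
  have hφ' : ∀ t, HasDerivAt (fun t => g' t - m * t) (g'' t - m) t := fun t =>
    ((hg' t).sub ((hasDerivAt_id t).const_mul m)).congr_deriv (by simp)
  have hconv : ConvexOn ℝ univ (fun t => g t - m / 2 * t ^ 2) := by
    refine convexOn_of_hasDerivWithinAt2_nonneg convex_univ
      (fun t _ => (hφ t).continuousAt.continuousWithinAt)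
      (fun t _ => (hφ t).hasDerivWithinAt) (fun t _ => (hφ' t).hasDerivWithinAt) ?_
    exact fun t _ => sub_nonneg.2 (hm t)
  have tangent : (g' x - m * x) * (y - x) ≤ (g y - m / 2 * y ^ 2) - (g x - m / 2 * x ^ 2) := by
    rcases lt_trichotomy x y with hxy | rfl | hxy
    · have := hconv.le_slope_of_hasDerivAt (mem_univ x) (mem_univ y) hxy (hφ x)
      rwa [slope_def_field, le_div_iff₀ (sub_pos.2 hxy)] at this
    · simp
    · have := hconv.slope_le_of_hasDerivAt (mem_univ y) (mem_univ x) hxy (hφ x)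
      rw [slope_def_field, div_le_iff₀ (sub_pos.2 hxy)] at this
      linarith
  linear_combination tangent

section Hessian

variable {E : Type*} [NormedAddCommGroup E] [NormedSpace ℝ E] {f : E → ℝ} {m : ℝ}

theorem taylor_lower_bound_along_of_le_hessian (hf : ContDiff ℝ 2 f) {v : E}
    (hhess : ∀ x, m ≤ iteratedFDeriv ℝ 2 f x (fun _ => v)) (a : E) (s : ℝ) :
    f a + fderiv ℝ f a v * s + m / 2 * s ^ 2 ≤ f (a + s • v) := by
  have hline : ∀ t : ℝ, HasDerivAt (fun t : ℝ => a + t • v) v t := fun t => by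
    simpa using ((hasDerivAt_id t).smul_const v).const_add a
  have hf1 : Differentiable ℝ f := hf.differentiable (by norm_num)
  have hf2 : Differentiable ℝ (fderiv ℝ f) :=
    (hf.fderiv_right (m := 1) (by norm_num)).differentiable (by norm_num)
  have hg : ∀ t : ℝ, HasDerivAt (fun t => f (a + t • v)) (fderiv ℝ f (a + t • v) v) t :=
    fun t => (hf1 _).hasFDerivAt.comp_hasDerivAt t (hline t)
  have hg' : ∀ t : ℝ, HasDerivAt (fun t => fderiv ℝ f (a + t • v) v)
      (iteratedFDeriv ℝ 2 f (a + t • v) (fun _ => v)) t := fun t => by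
    rw [iteratedFDeriv_two_apply]
    simpa using
      ((hf2 _).hasFDerivAt.comp_hasDerivAt t (hline t)).clm_apply (hasDerivAt_const t v)
  simpa using taylor_lower_bound_of_le_deriv2 hg hg' (fun t => hhess _) 0 s

theorem taylor_lower_bound_of_le_hessian (hf : ContDiff ℝ 2 f)
    (hhess : ∀ x v, ‖v‖ = 1 → m ≤ iteratedFDeriv ℝ 2 f x (fun _ => v)) (a h : E) :
    f a + fderiv ℝ f a h + m / 2 * ‖h‖ ^ 2 ≤ f (a + h) := by
  rcases eq_or_ne h 0 with rfl | hh
  · simp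
  have hnorm : ‖h‖ ≠ 0 := norm_ne_zero_iff.2 hh
  have hunit : ‖‖h‖⁻¹ • h‖ = 1 := by rw [norm_smul, norm_inv, norm_norm, inv_mul_cancel₀ hnorm]
  have := taylor_lower_bound_along_of_le_hessian hf (fun x => hhess x _ hunit) a ‖h‖
  rwa [smul_inv_smul₀ hnorm, map_smul, smul_eq_mul, mul_right_comm, inv_mul_cancel₀ hnorm,
    one_mul] at this

theorem lt_of_mem_interior_sublevel_of_le_hessian [Nontrivial E] (hf : ContDiff ℝ 2 f)
    (hm : 0 < m) (hhess : ∀ x v, ‖v‖ = 1 → m ≤ iteratedFDeriv ℝ 2 f x (fun _ => v)) {a : E}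
    {c : ℝ} (ha : a ∈ interior (f ⁻¹' Iic c)) : f a < c := by
  obtain ⟨r, hr, hball⟩ := Metric.isOpen_iff.1 isOpen_interior a ha
  obtain ⟨h, hh⟩ := exists_norm_eq E (half_pos hr).le
  have hmem : ∀ k : E, ‖k‖ = r / 2 → f (a + k) ≤ c := fun k hk => by
    have hk' : a + k ∈ ball a r := by
      rw [mem_ball, dist_eq_norm, add_sub_cancel_left, hk]; exact half_lt_self hr
    exact (interior_subset (hball hk') : a + k ∈ f ⁻¹' Iic c)
  -- Averaging the lower bounds at `a + h` and `a - h` cancels the first-order terms.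
  have hplus := taylor_lower_bound_of_le_hessian hf hhess a h
  have hminus := taylor_lower_bound_of_le_hessian hf hhess a (-h)
  rw [map_neg, norm_neg] at hminus
  have hgap : 0 < m / 2 * ‖h‖ ^ 2 := by rw [hh]; positivity
  linarith [hmem h hh, hmem (-h) (by rw [norm_neg, hh])]

end Hessian

section Sublevel

variable {E : Type*} [NormedAddCommGroup E] [NormedSpace ℝ E] {f : E → ℝ}

theorem exists_pos_mul_norm_sub_le_of_quadratic_growth {a : E} {c m : ℝ} (L : E →L[ℝ] ℝ)
    (hm : 0 < m) (ha : f a < c) (hgrowth : ∀ h, f a + L h + m * ‖h‖ ^ 2 ≤ f (a + h)) :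
    ∃ β > 0, ∀ x, c < f x → β * ‖x - a‖ ≤ f x - f a := by
  set R := (‖L‖ + 1) / m
  have hR : 0 < R := by positivity
  refine ⟨min 1 ((c - f a) / R), lt_min one_pos (div_pos (sub_pos.2 ha) hR), fun x hx => ?_⟩
  set s := ‖x - a‖
  rcases le_or_gt s R with hsR | hRs
  · calc min 1 ((c - f a) / R) * s ≤ (c - f a) / R * R :=
          mul_le_mul (min_le_right _ _) hsR (norm_nonneg _) (div_pos (sub_pos.2 ha) hR).le
      _ = c - f a := div_mul_cancel₀ _ hR.ne'
      _ ≤ f x - f a := by linarith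
  · -- Far from `a` the quadratic term beats the linear one: `m s² - ‖L‖ s ≥ s`.
    have hL : -(‖L‖ * s) ≤ L (x - a) := neg_le_of_abs_le (L.le_opNorm (x - a))
    have hgrow := hgrowth (x - a)
    rw [add_sub_cancel] at hgrow
    rw [div_lt_iff₀ hm, mul_comm] at hRs
    calc min 1 ((c - f a) / R) * s ≤ 1 * s := by gcongr; exact min_le_left _ _
      _ ≤ f x - f a := by nlinarith [norm_nonneg (x - a)]

theorem mul_infDist_sublevel_le_of_convexOn (hf : ConvexOn ℝ univ f) {a x : E} {c β : ℝ}
    (hβ : 0 ≤ β) (ha : f a ≤ c) (hx : c < f x) (hslope : β * ‖x - a‖ ≤ f x - f a) :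
    β * infDist x (f ⁻¹' Iic c) ≤ f x - c := by
  have hD : 0 < f x - f a := by linarith
  set t := (f x - c) / (f x - f a)
  have ht : 0 ≤ t := div_nonneg (by linarith) hD.le
  have ht1 : t ≤ 1 := (div_le_one hD).2 (by linarith)
  have htD : t * (f x - f a) = f x - c := div_mul_cancel₀ _ hD.ne'
  have hz : AffineMap.lineMap x a t ∈ f ⁻¹' Iic c := by
    have := hf.2 (mem_univ x) (mem_univ a) (sub_nonneg.2 ht1) ht (by ring)
    simp only [smul_eq_mul] at this
    rw [mem_preimage, mem_Iic, AffineMap.lineMap_apply_module]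
    linarith
  have hdist : infDist x (f ⁻¹' Iic c) ≤ t * ‖x - a‖ := by
    have := infDist_le_dist_of_mem (x := x) hz
    rwa [dist_left_lineMap, dist_eq_norm, Real.norm_eq_abs, abs_of_nonneg ht] at this
  calc β * infDist x (f ⁻¹' Iic c) ≤ β * (t * ‖x - a‖) := by gcongr
    _ = t * (β * ‖x - a‖) := by ring
    _ ≤ t * (f x - f a) := by gcongr
    _ = f x - c := htD

end Sublevel

/-- Let `ψ : ℝⁿ → ℝ` be convex of class `C²` with `D²ψ ≥ M > 0`, and `C = ψ⁻¹((-∞,1])` with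
nonempty interior. Then there exists `β > 0` with `ψ(x) - 1 ≥ β d(x,C)` for every `x ∉ C`. -/
theorem stmt_14 {n : ℕ} (ψ : EuclideanSpace ℝ (Fin n) → ℝ) (M : ℝ) (hM : 0 < M)
    (hψ : ContDiff ℝ 2 ψ) (hψconv : ConvexOn ℝ Set.univ ψ)
    (hhess : ∀ x v, ‖v‖ = 1 → M ≤ iteratedFDeriv ℝ 2 ψ x (fun _ => v))
    (hint : (interior (ψ ⁻¹' Set.Iic 1)).Nonempty) :
    ∃ β > (0:ℝ), ∀ x ∉ ψ ⁻¹' Set.Iic 1,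
      β * Metric.infDist x (ψ ⁻¹' Set.Iic 1) ≤ ψ x - 1 := by
  obtain ⟨x₀, hx₀⟩ := hint
  rcases subsingleton_or_nontrivial (EuclideanSpace ℝ (Fin n)) with hE | hE
  · exact ⟨1, one_pos, fun x hx => (hx (Subsingleton.elim x₀ x ▸ interior_subset hx₀)).elim⟩
  have hψx₀ : ψ x₀ < 1 := lt_of_mem_interior_sublevel_of_le_hessian hψ hM hhess hx₀
  obtain ⟨β, hβ, hslope⟩ := exists_pos_mul_norm_sub_le_of_quadratic_growth (fderiv ℝ ψ x₀)
    (half_pos hM) hψx₀ (taylor_lower_bound_of_le_hessian hψ hhess x₀)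
  refine ⟨β, hβ, fun x hx => ?_⟩
  have hx1 : 1 < ψ x := not_le.1 hx
  exact mul_infDist_sublevel_le_of_convexOn hψconv hβ.le hψx₀.le hx1 (hslope x hx1)
end

section
/- Let C = ⋂_{k=1}^N C_k where each C_k ⊆ ℝⁿ is convex and bounded, and suppose 0 ∈ int(C), with B̄(0,r) ⊆ C ⊆ B̄(0,R) for some 0 < r ≤ R. Then for every x ∈ ℝⁿ: max_{1≤k≤N} d(x, C_k) ≤ d(x, C) ≤ (R/r) · max_{1≤k≤N} d(x, C_k). -/
/-!
Write `μ_K` for the gauge of a convex body `K`. If `B(0,r) ⊆ K`, then `μ_K` is `1/r`-Lipschitz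
and at most `1` on `K`, so `μ_K(x) - 1 ≤ d(x,K)/r`. If `K ⊆ B̄(0,R)` and `x ∉ K`, the point
`x / μ_K(x)` lies in `closure K`, at distance `(μ_K(x) - 1) ‖x / μ_K(x)‖ ≤ R (μ_K(x) - 1)` from `x`.
Since the gauge of a finite intersection is the maximum of the gauges, applying the first bound to
the `C_k` of largest gauge and the second to `C = ⋂ C_k` gives `d(x,C) ≤ (R/r) d(x,C_k)`.
-/

open Metric Set Topology Pointwise

section Gauge

variable {E : Type*} [NormedAddCommGroup E] [NormedSpace ℝ E] {s : Set E} {x : E}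

theorem gauge_sub_one_le_infDist_div {r : ℝ} (hs : Convex ℝ s) (hr : 0 < r)
    (hball : ball (0 : E) r ⊆ s) (x : E) : gauge s x - 1 ≤ infDist x s / r := by
  rw [le_div_iff₀ hr]
  refine (le_infDist ⟨0, hball (mem_ball_self hr)⟩).2 fun y hy => ?_
  have hlip : gauge s x ≤ gauge s y + r⁻¹ * dist x y :=
    (hs.lipschitzWith_gauge (r := ⟨r, hr.le⟩) hr hball).le_add_mul x y
  calc (gauge s x - 1) * r ≤ (r⁻¹ * dist x y) * r := by
        gcongr
        linarith [gauge_le_one_of_mem hy]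
    _ = dist x y := by field_simp

theorem infDist_le_mul_gauge_sub_one {R : ℝ} (hs : Convex ℝ s) (hs₀ : s ∈ 𝓝 0)
    (hsR : s ⊆ closedBall 0 R) (hx : x ∉ s) : infDist x s ≤ R * (gauge s x - 1) := by
  set g := gauge s x
  have hg : 1 ≤ g := one_le_gauge_of_notMem (hs.starConvex (mem_of_mem_nhds hs₀))
    ((absorbent_nhds_zero hs₀) x) hx
  have hg₀ : 0 < g := zero_lt_one.trans_le hg
  have hy : g⁻¹ • x ∈ closure s := by
    rw [← gauge_le_one_iff_mem_closure hs hs₀, gauge_smul_of_nonneg (inv_nonneg.2 hg₀.le),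
      smul_eq_mul, inv_mul_cancel₀ hg₀.ne']
  have hyR : ‖g⁻¹ • x‖ ≤ R :=
    mem_closedBall_zero_iff.1 (closure_minimal hsR isClosed_closedBall hy)
  have hxy : x - g⁻¹ • x = (g - 1) • g⁻¹ • x := by
    rw [smul_smul, sub_mul, mul_inv_cancel₀ hg₀.ne', one_mul, sub_smul, one_smul]
  calc infDist x s = infDist x (closure s) := infDist_closure.symm
    _ ≤ dist x (g⁻¹ • x) := infDist_le_dist_of_mem hy
    _ = (g - 1) * ‖g⁻¹ • x‖ := by
      rw [dist_eq_norm, hxy, norm_smul, Real.norm_of_nonneg (sub_nonneg.2 hg)]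
    _ ≤ (g - 1) * R := by gcongr
    _ = R * (g - 1) := mul_comm _ _

theorem gauge_iInter_le_of_forall_le {ι : Type*} {s : ι → Set E} (hs : ∀ i, Convex ℝ (s i))
    (hs₀ : ∀ i, (0 : E) ∈ s i) (habs : ∀ i, Absorbent ℝ (s i)) {a : ℝ} (ha : 0 ≤ a)
    (h : ∀ i, gauge (s i) x ≤ a) : gauge (⋂ i, s i) x ≤ a := by
  refine le_of_forall_gt_imp_ge_of_dense fun t ht => gauge_le_of_mem (ha.trans ht.le) ?_
  have ht₀ : t ≠ 0 := (ha.trans_lt ht).ne'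
  refine (mem_smul_set_iff_inv_smul_mem₀ ht₀ _ _).2 (mem_iInter.2 fun i => ?_)
  have hx : x ∈ ⋂ (t : ℝ) (_ : a < t), t • s i := by
    rw [← setOfPred_gauge_le_eq (hs i) (hs₀ i) (habs i) ha]
    exact h i
  exact (mem_smul_set_iff_inv_smul_mem₀ ht₀ _ _).1 (mem_iInter₂.1 hx t ht)

end Gauge

theorem stmt_15_general {n N : ℕ} (hN : 0 < N) (C : Fin N → Set (EuclideanSpace ℝ (Fin n)))
    (hconv : ∀ i, Convex ℝ (C i))
    (r R : ℝ) (hr : 0 < r)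
    (hrC : Metric.closedBall 0 r ⊆ ⋂ i, C i)
    (hCR : (⋂ i, C i) ⊆ Metric.closedBall 0 R) :
    ∀ x : EuclideanSpace ℝ (Fin n),
      (∀ i, Metric.infDist x (C i) ≤ Metric.infDist x (⋂ i, C i)) ∧
      ∃ i, Metric.infDist x (⋂ i, C i) ≤ (R / r) * Metric.infDist x (C i) := by
  intro x
  have hnhds : (⋂ i, C i) ∈ 𝓝 0 := Filter.mem_of_superset (closedBall_mem_nhds 0 hr) hrC
  have h₀ : (0 : EuclideanSpace ℝ (Fin n)) ∈ ⋂ i, C i := mem_of_mem_nhds hnhds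
  have hball (i : Fin N) : ball 0 r ⊆ C i :=
    ball_subset_closedBall.trans (hrC.trans (iInter_subset _ i))
  refine ⟨fun i => infDist_le_infDist_of_subset (iInter_subset _ i) ⟨0, h₀⟩, ?_⟩
  have : Nonempty (Fin N) := ⟨⟨0, hN⟩⟩
  obtain ⟨i, hi⟩ := Finite.exists_max fun j => gauge (C j) x
  refine ⟨i, ?_⟩
  by_cases hx : x ∈ ⋂ j, C j
  · rw [infDist_zero_of_mem hx, infDist_zero_of_mem (mem_iInter.1 hx i), mul_zero]
  have hR : 0 ≤ R := dist_nonneg.trans (mem_closedBall.1 (hCR h₀))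
  have hgauge : gauge (⋂ j, C j) x ≤ gauge (C i) x :=
    gauge_iInter_le_of_forall_le hconv (mem_iInter.1 h₀)
      (fun j => (absorbent_ball_zero hr).mono (hball j)) (gauge_nonneg x) hi
  calc infDist x (⋂ j, C j) ≤ R * (gauge (⋂ j, C j) x - 1) :=
        infDist_le_mul_gauge_sub_one (convex_iInter hconv) hnhds hCR hx
    _ ≤ R * (infDist x (C i) / r) := by
        gcongr
        linarith [gauge_sub_one_le_infDist_div (hconv i) hr (hball i) x]
    _ = R / r * infDist x (C i) := by ring

/-- Let `C = ⋂_{k=1}^N C_k` with each `C_k ⊆ ℝⁿ` convex and bounded, and suppose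
`B̄(0,r) ⊆ C ⊆ B̄(0,R)` with `0 < r ≤ R`. Then for every `x`,
`max_k d(x, C_k) ≤ d(x, C) ≤ (R/r) · max_k d(x, C_k)`. -/
theorem stmt_15 {n N : ℕ} (hN : 0 < N) (C : Fin N → Set (EuclideanSpace ℝ (Fin n)))
    (hconv : ∀ i, Convex ℝ (C i)) (hbd : ∀ i, Bornology.IsBounded (C i))
    (r R : ℝ) (hr : 0 < r) (hrR : r ≤ R)
    (hrC : Metric.closedBall 0 r ⊆ ⋂ i, C i)
    (hCR : (⋂ i, C i) ⊆ Metric.closedBall 0 R) :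
    ∀ x : EuclideanSpace ℝ (Fin n),
      (∀ i, Metric.infDist x (C i) ≤ Metric.infDist x (⋂ i, C i)) ∧
      ∃ i, Metric.infDist x (⋂ i, C i) ≤ (R / r) * Metric.infDist x (C i) :=
  stmt_15_general hN C hconv r R hr hrC hCR
end

section
/- For m ≥ 2 even and A > 0, there is no convex function f ∈ C^m(ℝ²) such that D^k f(0,y) = 0 for all k ∈ {0,…,m−1} and all y ∈ [0,1], D^m f(0,0) = 0, D^m f(0,1) = 0, and D^m f(0, 1/2) = A · (e₁*)^{⊗m}. -/
/-- The point `(0, y)` of `ℝ²`. -/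
noncomputable def pt (y : ℝ) : EuclideanSpace ℝ (Fin 2) :=
  (WithLp.equiv 2 (Fin 2 → ℝ)).symm ![0, y]

open Set Filter Topology Nat

/-! Restrict `f` to the three parallel lines in direction `e₁` through `(0,0)`, `(0,1/2)` and
`(0,1)`. By convexity the defect `t ↦ 2 f(t,1/2) - f(t,0) - f(t,1)` is nonpositive, while its
derivatives at `t = 0` vanish below order `m` and its `m`-th derivative there is `2A > 0`; by
Taylor's theorem it is then positive for small `t > 0`. -/

theorem eventually_pos_of_iteratedDeriv_pos {h : ℝ → ℝ} {m : ℕ} {x₀ : ℝ} (hh : ContDiff ℝ m h)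
    (hlow : ∀ k < m, iteratedDeriv k h x₀ = 0) (htop : 0 < iteratedDeriv m h x₀) :
    ∀ᶠ x in 𝓝[>] x₀, 0 < h x := by
  set c := (m ! : ℝ)⁻¹ * iteratedDeriv m h x₀
  have hc : 0 < c := by positivity
  have htaylor : ∀ x, taylorWithinEval h m univ x₀ x = c * (x - x₀) ^ m := by
    intro x
    rw [taylor_within_apply, Finset.sum_range_succ, Finset.sum_eq_zero fun k hk => by
      rw [iteratedDerivWithin_univ, hlow k (Finset.mem_range.1 hk), smul_zero]]
    simp only [iteratedDerivWithin_univ, smul_eq_mul, c]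
    ring
  filter_upwards [nhdsWithin_le_nhds ((taylor_isLittleO_univ hh).def (half_pos hc)),
    self_mem_nhdsWithin] with x hx (hx₀ : x₀ < x)
  have hpow : 0 < (x - x₀) ^ m := pow_pos (sub_pos.2 hx₀) m
  rw [htaylor, Real.norm_eq_abs, Real.norm_eq_abs, abs_of_pos hpow] at hx
  nlinarith [(abs_le.1 hx).1]

theorem iteratedDeriv_comp_add_smul {𝕜 E F : Type*} [NontriviallyNormedField 𝕜]
    [NormedAddCommGroup E] [NormedSpace 𝕜 E] [NormedAddCommGroup F] [NormedSpace 𝕜 F]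
    {f : E → F} {n : WithTop ℕ∞} (hf : ContDiff 𝕜 n f) (c v : E) {k : ℕ} (hk : k ≤ n) (t : 𝕜) :
    iteratedDeriv k (fun s : 𝕜 => f (c + s • v)) t
      = iteratedFDeriv 𝕜 k f (c + t • v) (fun _ => v) := by
  have hline : (fun s : 𝕜 => f (c + s • v))
      = (fun z => f (c + z)) ∘ (ContinuousLinearMap.id 𝕜 𝕜).smulRight v := rfl
  have hshift : ContDiff 𝕜 n (fun z => f (c + z)) := hf.comp (contDiff_const.add contDiff_id)
  rw [iteratedDeriv_eq_iteratedFDeriv, hline,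
    ContinuousLinearMap.iteratedFDeriv_comp_right _ hshift _ hk]
  simp [iteratedFDeriv_comp_add_left]

theorem ConvexOn.two_mul_iteratedFDeriv_midpoint_le {E : Type*} [NormedAddCommGroup E]
    [NormedSpace ℝ E] {f : E → ℝ} {m : ℕ} (hconv : ConvexOn ℝ univ f) (hf : ContDiff ℝ m f)
    {x y : E} (hx : ∀ k < m, iteratedFDeriv ℝ k f x = 0)
    (hy : ∀ k < m, iteratedFDeriv ℝ k f y = 0)
    (hxy : ∀ k < m, iteratedFDeriv ℝ k f (midpoint ℝ x y) = 0) (v : E) :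
    2 * iteratedFDeriv ℝ m f (midpoint ℝ x y) (fun _ => v)
      ≤ iteratedFDeriv ℝ m f x (fun _ => v) + iteratedFDeriv ℝ m f y (fun _ => v) := by
  by_contra! hlt
  let slice : E → ℝ → ℝ := fun p t => f (p + t • v)
  have hslice : ∀ p, ContDiff ℝ m (slice p) := fun p =>
    hf.comp (contDiff_const.add (contDiff_id.smul contDiff_const))
  let defect : ℝ → ℝ := (2 : ℝ) • slice (midpoint ℝ x y) - (slice x + slice y)
  have defect_nonpos : ∀ t, defect t ≤ 0 := by
    intro t
    have hmid : midpoint ℝ x y + t • v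
        = (2⁻¹ : ℝ) • (x + t • v) + (2⁻¹ : ℝ) • (y + t • v) := by
      rw [midpoint_eq_smul_add, invOf_eq_inv]
      module
    have hconv_t := hconv.2 (mem_univ (x + t • v)) (mem_univ (y + t • v))
      (by norm_num : (0:ℝ) ≤ 2⁻¹) (by norm_num : (0:ℝ) ≤ 2⁻¹) (by norm_num)
    rw [← hmid, smul_eq_mul, smul_eq_mul] at hconv_t
    simp only [defect, slice, Pi.sub_apply, Pi.add_apply, Pi.smul_apply, smul_eq_mul]
    linarith
  have hjet : ∀ k ≤ m, iteratedDeriv k defect 0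
      = 2 * iteratedFDeriv ℝ k f (midpoint ℝ x y) (fun _ => v)
        - (iteratedFDeriv ℝ k f x (fun _ => v) + iteratedFDeriv ℝ k f y (fun _ => v)) := by
    intro k hk
    have hC : ∀ p, ContDiffAt ℝ k (slice p) 0 := fun p =>
      ((hslice p).of_le (by exact_mod_cast hk)).contDiffAt
    rw [iteratedDeriv_sub (f := (2 : ℝ) • slice (midpoint ℝ x y)) (g := slice x + slice y)
      ((hC _).const_smul (2 : ℝ)) ((hC x).add (hC y)),
      iteratedDeriv_const_smul_field, iteratedDeriv_add (hC x) (hC y)]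
    simp only [slice, iteratedDeriv_comp_add_smul hf _ v (by exact_mod_cast hk), zero_smul,
      add_zero, smul_eq_mul]
  have hdefect : ContDiff ℝ m defect :=
    (contDiff_const.smul (hslice _)).sub ((hslice x).add (hslice y))
  obtain ⟨t, ht⟩ := (eventually_pos_of_iteratedDeriv_pos hdefect
    (fun k hk => by rw [hjet k hk.le, hx k hk, hy k hk, hxy k hk]; simp)
    (by rw [hjet m le_rfl]; linarith)).exists
  exact (defect_nonpos t).not_gt ht

theorem stmt_18_general (m : ℕ) (A : ℝ) (hA : 0 < A) :
    ¬ ∃ f : EuclideanSpace ℝ (Fin 2) → ℝ, ContDiff ℝ (m : ℕ∞) f ∧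
        ConvexOn ℝ Set.univ f ∧
        (∀ y ∈ Set.Icc (0:ℝ) 1, ∀ k < m, iteratedFDeriv ℝ k f (pt y) = 0) ∧
        iteratedFDeriv ℝ m f (pt 0) = 0 ∧
        iteratedFDeriv ℝ m f (pt 1) = 0 ∧
        (∀ vs : Fin m → EuclideanSpace ℝ (Fin 2),
          iteratedFDeriv ℝ m f (pt (1/2)) vs = A * ∏ i, vs i 0) := by
  rintro ⟨f, hf, hconv, hlow, h0, h1, hmid⟩
  have hpt : midpoint ℝ (pt 0) (pt 1) = pt (1/2) := by
    ext i
    fin_cases i <;> simp [pt, midpoint_eq_smul_add]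
  have key := hconv.two_mul_iteratedFDeriv_midpoint_le hf (hlow 0 (by norm_num))
    (hlow 1 (by norm_num)) (hpt ▸ hlow (1/2) (by norm_num)) (EuclideanSpace.single 0 1)
  rw [hpt, h0, h1, hmid] at key
  simp only [PiLp.single_eq_same, Finset.prod_const_one, mul_one, zero_apply, add_zero] at key
  linarith

/-- For `m ≥ 2` even and `A > 0`, there is no convex `f ∈ Cᵐ(ℝ²)` such that `Dᵏf(0,y) = 0` for
all `k ≤ m-1` and `y ∈ [0,1]`, `Dᵐf(0,0) = Dᵐf(0,1) = 0`, and
`Dᵐf(0,1/2) = A·(e₁*)^{⊗m}`. -/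
theorem stmt_18 (m : ℕ) (hm : 2 ≤ m) (hmeven : Even m) (A : ℝ) (hA : 0 < A) :
    ¬ ∃ f : EuclideanSpace ℝ (Fin 2) → ℝ, ContDiff ℝ (m : ℕ∞) f ∧
        ConvexOn ℝ Set.univ f ∧
        (∀ y ∈ Set.Icc (0:ℝ) 1, ∀ k < m, iteratedFDeriv ℝ k f (pt y) = 0) ∧
        iteratedFDeriv ℝ m f (pt 0) = 0 ∧
        iteratedFDeriv ℝ m f (pt 1) = 0 ∧
        (∀ vs : Fin m → EuclideanSpace ℝ (Fin 2),
          iteratedFDeriv ℝ m f (pt (1/2)) vs = A * ∏ i, vs i 0) :=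
  stmt_18_general m A hA
end
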